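/- arXiv:1709.07907 — 13 statements merged into one kernel-verified Lean document; each statement's English description precedes it below -/
import Mathlib

section
/- Let X be a finite simple graph on n vertices with adjacency matrix A, and let A = ∑_{r=1}^d θ_r E_r be its spectral decomposition. Then the time average of the mixing matrix converges: (1/T) ∫_0^T (exp(itA) ∘ conj(exp(itA))) dt tends (entrywise) to ∑_{r=1}^d E_r ∘ E_r as T → ∞. -/
/-! Since the `E r` are complete orthogonal idempotents, `exp (itA) = ∑ r, exp (itθ_r) • E r`, so
the `(u, v)` entry of the mixing matrix is the trigonometric polynomial
`∑ r s, E r u v * E s u v * exp (i (θ_r - θ_s) t)`. Its time average tends to the sum of the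
coefficients of frequency zero, and as the `θ r` are distinct these are the terms with `r = s`. -/

open scoped Matrix

open Filter Topology Complex

namespace OrthogonalIdempotents

variable {R A ι : Type*} [CommSemiring R] [Semiring A] [Algebra R A] [Fintype ι] {P : ι → A}

theorem sum_smul_mul_sum_smul (hP : OrthogonalIdempotents P) (f g : ι → R) :
    (∑ i, f i • P i) * (∑ i, g i • P i) = ∑ i, (f i * g i) • P i := by
  rw [Finset.sum_mul_sum]
  refine Finset.sum_congr rfl fun i _ => ?_
  rw [Finset.sum_eq_single i
    (fun j _ hji => by rw [smul_mul_smul_comm, hP.ortho hji.symm, smul_zero]) (by simp),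
    smul_mul_smul_comm, (hP.idem i).eq]

end OrthogonalIdempotents

namespace CompleteOrthogonalIdempotents

variable {ι : Type*} [Fintype ι]

theorem sum_smul_pow {R A : Type*} [CommSemiring R] [Semiring A] [Algebra R A] {P : ι → A}
    (hP : CompleteOrthogonalIdempotents P) (f : ι → R) (n : ℕ) :
    (∑ i, f i • P i) ^ n = ∑ i, f i ^ n • P i := by
  induction n with
  | zero => simpa using hP.complete.symm
  | succ n ih =>
    simp_rw [pow_succ, ih, hP.sum_smul_mul_sum_smul]

theorem exp_sum_smul {A : Type*} [Ring A] [Algebra ℂ A] [TopologicalSpace A] [IsTopologicalRing A]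
    [ContinuousSMul ℂ A] [T2Space A] {P : ι → A} (hP : CompleteOrthogonalIdempotents P)
    (c : ι → ℂ) : NormedSpace.exp (∑ i, c i • P i) = ∑ i, cexp (c i) • P i := by
  rw [NormedSpace.exp_eq_tsum ℂ]
  simp_rw [hP.sum_smul_pow, Finset.smul_sum, smul_smul]
  refine (hasSum_sum fun i _ => ?_).tsum_eq
  simpa [exp_eq_exp_ℂ] using (NormedSpace.exp_series_hasSum_exp' (𝕂 := ℂ) (c i)).smul_const (P i)

end CompleteOrthogonalIdempotents

theorem tendsto_inv_mul_integral_exp_mul_I (ω : ℝ) :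
    Tendsto (fun T : ℝ => (T : ℂ)⁻¹ * ∫ t in (0 : ℝ)..T, cexp (ω * t * I)) atTop
      (𝓝 (if ω = 0 then 1 else 0)) := by
  split_ifs with hω
  · subst hω
    refine tendsto_const_nhds.congr' ?_
    filter_upwards [eventually_ne_atTop 0] with T hT
    simp [hT]
  have hz : (ω : ℂ) * I ≠ 0 := mul_ne_zero (ofReal_ne_zero.mpr hω) I_ne_zero
  have hbound : ∀ T : ℝ, ‖∫ t in (0 : ℝ)..T, cexp (ω * t * I)‖ ≤ 2 / |ω| := fun T => by
    simp_rw [mul_right_comm _ _ I]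
    rw [integral_exp_mul_complex hz, norm_div, norm_mul, norm_I, mul_one, norm_real,
      Real.norm_eq_abs]
    gcongr
    calc ‖cexp (ω * I * T) - cexp (ω * I * (0 : ℝ))‖
        ≤ ‖cexp (ω * I * T)‖ + ‖cexp (ω * I * (0 : ℝ))‖ := norm_sub_le _ _
      _ = 2 := by
        simp_rw [mul_right_comm _ I, ← ofReal_mul, norm_exp_ofReal_mul_I]
        norm_num
  have hinv : Tendsto (fun T : ℝ => (T : ℂ)⁻¹) atTop (𝓝 0) := by
    simpa [Function.comp_def] using (continuous_ofReal.tendsto 0).comp tendsto_inv_atTop_zero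
  exact hinv.zero_mul_isBoundedUnder_le
    ⟨2 / |ω|, eventually_map.mpr (Eventually.of_forall hbound)⟩

theorem tendsto_inv_mul_integral_sum_exp_mul_I {ι : Type*} (s : Finset ι) (a : ι → ℂ)
    (ω : ι → ℝ) :
    Tendsto (fun T : ℝ => (T : ℂ)⁻¹ * ∫ t in (0 : ℝ)..T, ∑ k ∈ s, a k * cexp (ω k * t * I))
      atTop (𝓝 (∑ k ∈ s with ω k = 0, a k)) := by
  have hint : ∀ k T, IntervalIntegrable (fun t : ℝ => a k * cexp (ω k * t * I))
      MeasureTheory.volume 0 T := fun k T => (by fun_prop : Continuous _).intervalIntegrable 0 T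
  have hsplit : ∀ T : ℝ, (T : ℂ)⁻¹ * ∫ t in (0 : ℝ)..T, ∑ k ∈ s, a k * cexp (ω k * t * I) =
      ∑ k ∈ s, a k * ((T : ℂ)⁻¹ * ∫ t in (0 : ℝ)..T, cexp (ω k * t * I)) := fun T => by
    rw [intervalIntegral.integral_finsetSum fun k _ => hint k T, Finset.mul_sum]
    simp_rw [intervalIntegral.integral_const_mul, mul_left_comm]
  simp_rw [hsplit, Finset.sum_filter]
  refine tendsto_finsetSum s fun k _ => ?_
  simpa [mul_ite] using (tendsto_inv_mul_integral_exp_mul_I (ω k)).const_mul (a k)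

theorem average_mixing_matrix_limit_general {V : Type*} [Fintype V] [DecidableEq V]
    (A : Matrix V V ℝ)
    (d : ℕ) (θ : Fin d → ℝ) (hθ : Function.Injective θ)
    (E : Fin d → Matrix V V ℝ)
    (horth : ∀ r s, E r * E s = if r = s then E r else 0)
    (hsum : ∑ r, E r = 1)
    (hdecomp : A = ∑ r, θ r • E r)
    (u v : V) :
    Filter.Tendsto
      (fun T : ℝ => (T : ℂ)⁻¹ *
        ∫ t in (0:ℝ)..T,
          ((NormedSpace.exp (((t : ℂ) * Complex.I) • A.map (Complex.ofReal)))
            ⊙ ((NormedSpace.exp (((t : ℂ) * Complex.I) • A.map (Complex.ofReal))).map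
                (starRingEnd ℂ))) u v)
      Filter.atTop
      (nhds (((∑ r, E r ⊙ E r) u v : ℝ) : ℂ)) := by
  have hE : CompleteOrthogonalIdempotents E :=
    { idem := fun r => (horth r r).trans (if_pos rfl)
      ortho := fun r s hrs => by simpa [hrs] using horth r s
      complete := hsum }
  have hexp : ∀ t : ℝ, NormedSpace.exp (((t : ℂ) * I) • A.map ofReal) =
      ∑ r, cexp (θ r * t * I) • (E r).map ofReal := fun t => by
    convert (hE.map ofRealHom.mapMatrix).exp_sum_smul (fun r => θ r * t * I) using 2
    · ext i j
      simp only [hdecomp, Matrix.smul_apply, Matrix.map_apply, Matrix.sum_apply, smul_eq_mul,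
        ofReal_sum, ofReal_mul, Finset.mul_sum, Function.comp_apply, RingHom.mapMatrix_apply,
        ofRealHom_eq_coe]
      exact Finset.sum_congr rfl fun r _ => by ring
    · rfl
  have hentry : ∀ t : ℝ, ((NormedSpace.exp (((t : ℂ) * I) • A.map ofReal))
      ⊙ ((NormedSpace.exp (((t : ℂ) * I) • A.map ofReal)).map (starRingEnd ℂ))) u v =
      ∑ p : Fin d × Fin d,
        ((E p.1 u v * E p.2 u v : ℝ) : ℂ) * cexp ((θ p.1 - θ p.2 : ℝ) * t * I) := fun t => by
    rw [hexp, Matrix.hadamard_apply, Matrix.map_apply]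
    simp only [Matrix.sum_apply, Matrix.smul_apply, Matrix.map_apply, map_sum, smul_eq_mul,
      map_mul]
    rw [Finset.sum_mul_sum, ← Finset.sum_product', Finset.univ_product_univ]
    refine Finset.sum_congr rfl fun p _ => ?_
    simp only [← exp_conj, map_mul, conj_ofReal, conj_I]
    rw [mul_mul_mul_comm, ← exp_add]
    push_cast
    ring_nf
  simp_rw [hentry]
  convert tendsto_inv_mul_integral_sum_exp_mul_I _ _ _ using 2
  rw [Finset.sum_filter, Fintype.sum_prod_type]
  simp [sub_eq_zero, hθ.eq_iff, Matrix.sum_apply]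

/-- Let `X` be a finite simple graph with adjacency matrix `A` and
spectral decomposition `A = ∑ θ r • E r`.  Then, entrywise, the time average
`(1/T) ∫_0^T exp(itA) ∘ conj (exp(itA)) dt` tends to `∑ r, E r ⊙ E r` as `T → ∞`. -/
theorem average_mixing_matrix_limit {V : Type*} [Fintype V] [DecidableEq V]
    (G : SimpleGraph V) [DecidableRel G.Adj]
    (A : Matrix V V ℝ) (hA : A = G.adjMatrix ℝ)
    (d : ℕ) (θ : Fin d → ℝ) (hθ : Function.Injective θ)
    (E : Fin d → Matrix V V ℝ)
    (hsymm : ∀ r, (E r).IsSymm)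
    (horth : ∀ r s, E r * E s = if r = s then E r else 0)
    (hsum : ∑ r, E r = 1)
    (hdecomp : A = ∑ r, θ r • E r)
    (u v : V) :
    Filter.Tendsto
      (fun T : ℝ => (T : ℂ)⁻¹ *
        ∫ t in (0:ℝ)..T,
          ((NormedSpace.exp (((t : ℂ) * Complex.I) • A.map (Complex.ofReal)))
            ⊙ ((NormedSpace.exp (((t : ℂ) * Complex.I) • A.map (Complex.ofReal))).map
                (starRingEnd ℂ))) u v)
      Filter.atTop
      (nhds (((∑ r, E r ⊙ E r) u v : ℝ) : ℂ)) :=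
  average_mixing_matrix_limit_general A d θ hθ E horth hsum hdecomp u v
end

section
/- For every n ≥ 3, the average mixing matrix of the star graph K_{1,n} (the complete bipartite graph with one center vertex and n leaves, on n+1 vertices) has full rank n+1. -/
/-!
The adjacency matrix `A` of `K_{1,n}` satisfies `A³ = n • A`, so its eigenvalues lie in
`{0, √n, -√n}` and its spectral projections are the Lagrange polynomials `1 - A² / n` and
`(A² ± √n • A) / (2n)` in `A`. The sum of their Schur squares is an explicit matrix which, for
`n ≥ 3`, is a positive definite diagonal matrix plus a positive semidefinite rank-one matrix.
-/

open scoped Matrix Classical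

/-- The adjacency matrix of the star graph `K_{1,n}`. -/
noncomputable def starAdjMatrix (n : ℕ) :
    Matrix (Fin 1 ⊕ Fin n) (Fin 1 ⊕ Fin n) ℝ :=
  (completeBipartiteGraph (Fin 1) (Fin n)).adjMatrix ℝ

open Matrix Polynomial

theorem Matrix.sum_smul_hadamard_sum_smul {ι κ : Type*} [Fintype κ] (c c' : κ → ℝ)
    (E : κ → Matrix ι ι ℝ) :
    (∑ r, c r • E r) ⊙ (∑ t, c' t • E t) = ∑ r, ∑ t, (c r * c' t) • (E r ⊙ E t) := by
  ext i j
  simp only [hadamard_apply, sum_apply, smul_apply, smul_eq_mul, Finset.sum_mul_sum,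
    mul_mul_mul_comm]

section SpectralDecomposition

variable {ι κ m : Type*} [Fintype ι] [DecidableEq ι] [Fintype κ] [DecidableEq κ] [Fintype m]

structure IsSpectralDecomposition (A : Matrix ι ι ℝ) (θ : κ → ℝ) (E : κ → Matrix ι ι ℝ) :
    Prop where
  mul_eq : ∀ r s, E r * E s = if r = s then E r else 0
  sum_eq_one : ∑ r, E r = 1
  eq_sum : A = ∑ r, θ r • E r

namespace IsSpectralDecomposition

variable {A : Matrix ι ι ℝ} {θ : κ → ℝ} {E : κ → Matrix ι ι ℝ}

theorem sum_smul_mul (hE : IsSpectralDecomposition A θ E) (c : κ → ℝ) (r : κ) :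
    (∑ t, c t • E t) * E r = c r • E r := by
  simp [Finset.sum_mul, hE.mul_eq]

theorem sum_smul_mul_sum_smul (hE : IsSpectralDecomposition A θ E) (c c' : κ → ℝ) :
    (∑ r, c r • E r) * (∑ r, c' r • E r) = ∑ r, (c r * c' r) • E r := by
  simp only [Finset.mul_sum, mul_smul_comm, hE.sum_smul_mul, smul_smul, mul_comm]

theorem pow_eq_sum (hE : IsSpectralDecomposition A θ E) (k : ℕ) :
    A ^ k = ∑ r, θ r ^ k • E r := by
  induction k with
  | zero => simpa using hE.sum_eq_one.symm
  | succ k ih =>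
    rw [pow_succ, ih, hE.eq_sum, hE.sum_smul_mul_sum_smul]
    simp only [pow_succ]

theorem aeval_eq_sum (hE : IsSpectralDecomposition A θ E) (p : ℝ[X]) :
    aeval A p = ∑ r, p.eval (θ r) • E r := by
  simp only [aeval_eq_sum_range, eval_eq_sum_range, hE.pow_eq_sum, Finset.smul_sum, smul_smul,
    Finset.sum_smul]
  exact Finset.sum_comm

theorem eval_eq_zero_of_aeval_eq_zero (hE : IsSpectralDecomposition A θ E) {p : ℝ[X]}
    (hp : aeval A p = 0) {r : κ} (hr : E r ≠ 0) : p.eval (θ r) = 0 := by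
  have h := hE.sum_smul_mul (fun t => p.eval (θ t)) r
  rw [← hE.aeval_eq_sum, hp, zero_mul, eq_comm, smul_eq_zero] at h
  exact h.resolve_right hr

theorem sum_hadamard_aeval_self (hE : IsSpectralDecomposition A θ E) (p : m → ℝ[X])
    (hp : ∀ r t, E r ≠ 0 → E t ≠ 0 →
      ∑ k, (p k).eval (θ r) * (p k).eval (θ t) = if r = t then 1 else 0) :
    ∑ k, aeval A (p k) ⊙ aeval A (p k) = ∑ r, E r ⊙ E r := by
  have hcoeff : ∀ r t, (∑ k, (p k).eval (θ r) * (p k).eval (θ t)) • (E r ⊙ E t) =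
      if r = t then E r ⊙ E t else 0 := by
    intro r t
    by_cases hr : E r = 0
    · simp [hr]
    by_cases ht : E t = 0
    · simp [ht]
    rw [hp r t hr ht, ite_smul, one_smul, zero_smul]
  simp only [hE.aeval_eq_sum, sum_smul_hadamard_sum_smul]
  rw [Finset.sum_comm]
  simp only [Finset.sum_comm (γ := m), ← Finset.sum_smul, hcoeff, Finset.sum_ite_eq,
    Finset.mem_univ, if_true]

theorem sum_hadamard_aeval_self_of_eval_eq_ite [DecidableEq m]
    (hE : IsSpectralDecomposition A θ E) (hθ : Function.Injective θ) {μ : m → ℝ} (p : m → ℝ[X])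
    (hp : ∀ k j, (p k).eval (μ j) = if k = j then 1 else 0)
    (hspec : ∀ r, E r ≠ 0 → θ r ∈ Set.range μ) :
    ∑ k, aeval A (p k) ⊙ aeval A (p k) = ∑ r, E r ⊙ E r := by
  have hμ : Function.Injective μ := fun i j hij => by
    simpa [hij, hp] using hp i i
  refine hE.sum_hadamard_aeval_self p fun r t hr ht => ?_
  obtain ⟨i, hi⟩ := hspec r hr
  obtain ⟨j, hj⟩ := hspec t ht
  have hij : i = j ↔ r = t := by rw [← hμ.eq_iff, hi, hj, hθ.eq_iff]
  simp only [← hi, ← hj, hp, ite_mul, one_mul, zero_mul, Finset.sum_ite_eq', Finset.mem_univ,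
    if_true, hij]

end IsSpectralDecomposition

end SpectralDecomposition

section Star

variable (n : ℕ)

theorem starAdjMatrix_pow_three : starAdjMatrix n ^ 3 = (n : ℝ) • starAdjMatrix n := by
  ext u v
  cases u <;> cases v <;> simp [pow_succ, mul_apply, Fintype.sum_sum_type, starAdjMatrix]

noncomputable def starEigenvalues : Fin 3 → ℝ := ![0, √n, -√n]

noncomputable def starProjPoly : Fin 3 → ℝ[X] :=
  ![1 - (n : ℝ)⁻¹ • X ^ 2, (2 * n : ℝ)⁻¹ • (X ^ 2 + √n • X), (2 * n : ℝ)⁻¹ • (X ^ 2 - √n • X)]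

noncomputable def starMixingVec : Fin 1 ⊕ Fin n → ℝ :=
  Sum.elim (fun _ => 1 / 3) (fun _ => (n : ℝ)⁻¹)

noncomputable def starMixingDiag : Fin 1 ⊕ Fin n → ℝ :=
  Sum.elim (fun _ => 1 / 3) (fun _ => 1 - 2 / n)

/-- Entrywise: `1/2` at the centre, `1/(2n)` between the centre and a leaf, and
`(1 - 2/n) δᵢⱼ + 3/(2n²)` between leaves `i, j`; the splitting completes the square
`x₀²/2 + x₀ S/n + 3 S²/(2n²) = x₀²/3 + (3/2) (x₀/3 + S/n)²`, where `S` is the sum over the leaves. -/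
noncomputable def starMixing : Matrix (Fin 1 ⊕ Fin n) (Fin 1 ⊕ Fin n) ℝ :=
  diagonal (starMixingDiag n) + (3 / 2 : ℝ) • vecMulVec (starMixingVec n) (starMixingVec n)

variable {n}

theorem eval_starProjPoly (hn : n ≠ 0) (k j : Fin 3) :
    (starProjPoly n k).eval (starEigenvalues n j) = if k = j then 1 else 0 := by
  have hn' : (n : ℝ) ≠ 0 := by exact_mod_cast hn
  have hs : √n ^ 2 = n := Real.sq_sqrt n.cast_nonneg
  fin_cases k <;> fin_cases j <;>
    simp [starProjPoly, starEigenvalues, hs] <;> field_simp <;> ring_nf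

theorem starEigenvalues_mem_range {κ : Type*} [Fintype κ] [DecidableEq κ] {θ : κ → ℝ}
    {E : κ → Matrix (Fin 1 ⊕ Fin n) (Fin 1 ⊕ Fin n) ℝ}
    (hE : IsSpectralDecomposition (starAdjMatrix n) θ E) {r : κ} (hr : E r ≠ 0) :
    θ r ∈ Set.range (starEigenvalues n) := by
  have hroot : (X ^ 3 - (n : ℝ) • X : ℝ[X]).eval (θ r) = 0 :=
    hE.eval_eq_zero_of_aeval_eq_zero (by simp [starAdjMatrix_pow_three]) hr
  have hs : √n ^ 2 = n := Real.sq_sqrt n.cast_nonneg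
  have hfactor : θ r * ((θ r - √n) * (θ r + √n)) = 0 := by
    simp only [eval_sub, eval_pow, eval_X, eval_smul, smul_eq_mul] at hroot
    linear_combination hroot - θ r * hs
  rcases mul_eq_zero.1 hfactor with h | h
  · exact ⟨0, h.symm⟩
  rcases mul_eq_zero.1 h with h | h
  · exact ⟨1, (sub_eq_zero.1 h).symm⟩
  · exact ⟨2, (eq_neg_of_add_eq_zero_left h).symm⟩

theorem sum_hadamard_aeval_starProjPoly (hn : n ≠ 0) :
    ∑ k, aeval (starAdjMatrix n) (starProjPoly n k) ⊙ aeval (starAdjMatrix n) (starProjPoly n k)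
      = starMixing n := by
  have hn' : (n : ℝ) ≠ 0 := by exact_mod_cast hn
  have hs : √n ^ 2 = n := Real.sq_sqrt n.cast_nonneg
  ext u v
  simp only [Fin.sum_univ_three, starProjPoly]
  rcases u with a | i <;> rcases v with b | j <;>
    simp [sq, mul_apply, Fintype.sum_sum_type, one_apply, diagonal_apply, vecMulVec_apply,
      starAdjMatrix, starMixing, starMixingVec, starMixingDiag, Fin.fin_one_eq_zero] <;>
    (try split_ifs) <;> field_simp <;> (try rw [hs]) <;> ring

theorem starMixing_posDef (hn : 3 ≤ n) : (starMixing n).PosDef := by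
  refine PosDef.add_posSemidef ?_ (PosSemidef.smul ?_ (a := (3 / 2 : ℝ)) (by norm_num))
  · rw [posDef_diagonal_iff]
    have h2n : (2 : ℝ) / n < 1 := by
      rw [div_lt_one (by positivity)]
      exact_mod_cast hn
    rintro (i | i)
    · norm_num [starMixingDiag]
    · simpa [starMixingDiag] using h2n
  · simpa using posSemidef_vecMulVec_self_star (starMixingVec n)

end Star

theorem rank_avgMixing_star_general (n : ℕ) (hn : 3 ≤ n)
    (d : ℕ) (θ : Fin d → ℝ) (hθ : Function.Injective θ)
    (E : Fin d → Matrix (Fin 1 ⊕ Fin n) (Fin 1 ⊕ Fin n) ℝ)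
    (horth : ∀ r s, E r * E s = if r = s then E r else 0)
    (hsum : ∑ r, E r = 1)
    (hdecomp : starAdjMatrix n = ∑ r, θ r • E r) :
    (∑ r, E r ⊙ E r).rank = n + 1 := by
  have hE : IsSpectralDecomposition (starAdjMatrix n) θ E := ⟨horth, hsum, hdecomp⟩
  have hn0 : n ≠ 0 := by omega
  rw [← hE.sum_hadamard_aeval_self_of_eval_eq_ite hθ (starProjPoly n) (eval_starProjPoly hn0)
      fun r => starEigenvalues_mem_range hE, sum_hadamard_aeval_starProjPoly hn0,
    rank_of_isUnit _ (starMixing_posDef hn).isUnit]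
  simp [add_comm]

/-- For every `n ≥ 3`, the average mixing matrix of the star `K_{1,n}`
(on `n + 1` vertices) has full rank `n + 1`. -/
theorem rank_avgMixing_star (n : ℕ) (hn : 3 ≤ n)
    (d : ℕ) (θ : Fin d → ℝ) (hθ : Function.Injective θ)
    (E : Fin d → Matrix (Fin 1 ⊕ Fin n) (Fin 1 ⊕ Fin n) ℝ)
    (hsymm : ∀ r, (E r).IsSymm)
    (horth : ∀ r s, E r * E s = if r = s then E r else 0)
    (hsum : ∑ r, E r = 1)
    (hdecomp : starAdjMatrix n = ∑ r, θ r • E r) :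
    (∑ r, E r ⊙ E r).rank = n + 1 :=
  rank_avgMixing_star_general n hn d θ hθ E horth hsum hdecomp
end

section
/- Let A be the adjacency matrix of a finite simple graph X on n vertices and let B be the 2n × 2n block matrix [[A, I],[I, 0]] (the adjacency matrix of the rooted product X(K_2)). Then for every real number x ≠ 0, the characteristic polynomial of B evaluated at x equals x^n times the characteristic polynomial of A evaluated at x − 1/x. -/
namespace Matrix

variable {n K : Type*} [Fintype n] [DecidableEq n]

theorem scalar_sub_fromBlocks_one_one_zero [Ring K] (M : Matrix n n K) (t : K) :
    scalar (n ⊕ n) t - fromBlocks M 1 1 0 =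
      fromBlocks (scalar n t - M) (-1) (-1) (scalar n t) := by
  ext (i | i) (j | j) <;> simp [one_apply, diagonal_apply]

theorem det_fromBlocks_neg_one_neg_one_scalar [Field K] (N : Matrix n n K) {t : K} (ht : t ≠ 0) :
    (fromBlocks N (-1) (-1) (scalar n t)).det = t ^ Fintype.card n * (N - scalar n t⁻¹).det := by
  let := invertibleOfNonzero ht
  let : Invertible (scalar n t) := Invertible.map (scalar n) t
  rw [det_fromBlocks₂₂, ← map_invOf, invOf_eq_inv]
  simp [scalar_apply]

theorem eval_charpoly_fromBlocks_one_one_zero [Field K] (M : Matrix n n K) {t : K} (ht : t ≠ 0) :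
    (fromBlocks M 1 1 0 : Matrix (n ⊕ n) (n ⊕ n) K).charpoly.eval t =
      t ^ Fintype.card n * M.charpoly.eval (t - t⁻¹) := by
  rw [eval_charpoly, eval_charpoly, scalar_sub_fromBlocks_one_one_zero,
    det_fromBlocks_neg_one_neg_one_scalar _ ht, map_sub, sub_right_comm]

end Matrix

theorem charpoly_rootedProduct_general {V : Type*} [Fintype V] [DecidableEq V]
    (A : Matrix V V ℝ)
    (B : Matrix (V ⊕ V) (V ⊕ V) ℝ) (hB : B = Matrix.fromBlocks A 1 1 0)
    (x : ℝ) (hx : x ≠ 0) :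
    B.charpoly.eval x = x ^ (Fintype.card V) * A.charpoly.eval (x - 1 / x) := by
  rw [hB, Matrix.eval_charpoly_fromBlocks_one_one_zero A hx, one_div]

/-- If `A` is the adjacency matrix of a graph on `n` vertices and
`B = [[A, I], [I, 0]]` is the adjacency matrix of the rooted product `X(K₂)`, then for every
nonzero real `x`, `φ(B, x) = xⁿ · φ(A, x − 1/x)`. -/
theorem charpoly_rootedProduct {V : Type*} [Fintype V] [DecidableEq V]
    (G : SimpleGraph V) [DecidableRel G.Adj]
    (A : Matrix V V ℝ) (hA : A = G.adjMatrix ℝ)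
    (B : Matrix (V ⊕ V) (V ⊕ V) ℝ) (hB : B = Matrix.fromBlocks A 1 1 0)
    (x : ℝ) (hx : x ≠ 0) :
    B.charpoly.eval x = x ^ (Fintype.card V) * A.charpoly.eval (x - 1 / x) :=
  charpoly_rootedProduct_general A B hB x hx
end

section
/- Let X be a finite simple graph on n vertices whose adjacency matrix A has n distinct eigenvalues, and let B = [[A, I],[I, 0]] be the adjacency matrix of the rooted product X(K_2). Then B has 2n distinct eigenvalues, and a real number μ is an eigenvalue of B if and only if μ² − λμ − 1 = 0 for some eigenvalue λ of A. -/
/-!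
If `(x, y)` is an eigenvector of `[[A, I], [I, 0]]` for `μ`, then `A x + y = μ x` and `x = μ y`;
hence `μ ≠ 0` and `y` is an eigenvector of `A` for `μ - μ⁻¹`, and conversely every eigenvector `y`
of `A` for `μ - μ⁻¹` gives the eigenvector `(μ y, y)`. So the spectrum of the rooted product is the
preimage of the spectrum of `A` under `μ ↦ μ - μ⁻¹` on `ℝ ∖ {0}`. This map is a bijection from each
of the half-lines `μ > 0` and `μ < 0` onto `ℝ`, with inverses `l ↦ (l ± √(l² + 4)) / 2`, so every
eigenvalue of `A` contributes exactly two eigenvalues.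
-/

open scoped Matrix

theorem sq_sub_mul_sub_one_eq_zero_iff {F : Type*} [Field F] {lam μ : F} :
    μ ^ 2 - lam * μ - 1 = 0 ↔ μ ≠ 0 ∧ μ - μ⁻¹ = lam := by
  constructor
  · intro h
    have hμ : μ ≠ 0 := by
      rintro rfl
      norm_num at h
    refine ⟨hμ, ?_⟩
    field_simp
    linear_combination h
  · rintro ⟨hμ, rfl⟩
    field_simp
    ring

namespace Matrix

variable {K n : Type*} [Field K] [Fintype n] [DecidableEq n]

theorem mem_spectrum_iff_exists_mulVec_eq_smul (M : Matrix n n K) (μ : K) :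
    μ ∈ spectrum K M ↔ ∃ v ≠ 0, M *ᵥ v = μ • v := by
  rw [← spectrum_toLin', ← Module.End.hasEigenvalue_iff_mem_spectrum]
  constructor
  · intro h
    obtain ⟨v, hv⟩ := h.exists_hasEigenvector
    exact ⟨v, hv.2, by simpa using hv.apply_eq_smul⟩
  · rintro ⟨v, hv, hMv⟩
    exact Module.End.hasEigenvalue_of_hasEigenvector ⟨by simpa using hMv, hv⟩

theorem fromBlocks_one_one_zero_mulVec_eq_smul_iff {R : Type*} [Semiring R] (A : Matrix n n R)
    (x y : n → R) (μ : R) :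
    fromBlocks A 1 1 0 *ᵥ Sum.elim x y = μ • Sum.elim x y ↔ A *ᵥ x + y = μ • x ∧ x = μ • y := by
  rw [fromBlocks_mulVec, show μ • Sum.elim x y = Sum.elim (μ • x) (μ • y) by ext (i | i) <;> rfl,
    Sum.elim_eq_iff]
  simp

theorem mem_spectrum_fromBlocks_one_one_zero_iff (A : Matrix n n K) (μ : K) :
    μ ∈ spectrum K (fromBlocks A 1 1 (0 : Matrix n n K)) ↔ μ ≠ 0 ∧ μ - μ⁻¹ ∈ spectrum K A := by
  simp only [mem_spectrum_iff_exists_mulVec_eq_smul]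
  constructor
  · rintro ⟨v, hv, hAv⟩
    obtain ⟨x, y, rfl⟩ : ∃ x y, v = Sum.elim x y := ⟨_, _, (Sum.elim_comp_inl_inr v).symm⟩
    obtain ⟨hx, rfl⟩ := (fromBlocks_one_one_zero_mulVec_eq_smul_iff A x y μ).1 hAv
    have hy : y ≠ 0 := by
      rintro rfl
      simp at hv
    have hμ : μ ≠ 0 := by
      rintro rfl
      simp_all
    refine ⟨hμ, y, hy, ?_⟩
    rw [mulVec_smul] at hx
    have hinv : μ * μ⁻¹ = 1 := mul_inv_cancel₀ hμ
    linear_combination (norm := module) μ⁻¹ • hx - hinv • (A *ᵥ y - μ • y)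
  · rintro ⟨hμ, y, hy, hAy⟩
    refine ⟨Sum.elim (μ • y) y, fun h ↦ hy (funext fun i ↦ congrFun h (.inr i)), ?_⟩
    refine (fromBlocks_one_one_zero_mulVec_eq_smul_iff A _ y μ).2 ⟨?_, rfl⟩
    rw [mulVec_smul, hAy]
    have hinv : μ * μ⁻¹ = 1 := mul_inv_cancel₀ hμ
    linear_combination (norm := module) -hinv • y

theorem mem_spectrum_fromBlocks_one_one_zero_iff_exists (A : Matrix n n K) (μ : K) :
    μ ∈ spectrum K (fromBlocks A 1 1 (0 : Matrix n n K)) ↔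
      ∃ lam ∈ spectrum K A, μ ^ 2 - lam * μ - 1 = 0 := by
  simp [mem_spectrum_fromBlocks_one_one_zero_iff, sq_sub_mul_sub_one_eq_zero_iff, and_comm]

end Matrix

noncomputable def subInvPosRoot (l : ℝ) : ℝ := (l + √(l ^ 2 + 4)) / 2

noncomputable def subInvNegRoot (l : ℝ) : ℝ := (l - √(l ^ 2 + 4)) / 2

theorem abs_lt_sqrt_sq_add_four (l : ℝ) : |l| < √(l ^ 2 + 4) := by
  rw [← Real.sqrt_sq_eq_abs]
  exact Real.sqrt_lt_sqrt (sq_nonneg l) (by linarith)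

theorem subInvPosRoot_pos (l : ℝ) : 0 < subInvPosRoot l := by
  have := abs_lt_sqrt_sq_add_four l
  have := neg_abs_le l
  unfold subInvPosRoot
  linarith

theorem subInvNegRoot_neg (l : ℝ) : subInvNegRoot l < 0 := by
  have := abs_lt_sqrt_sq_add_four l
  have := le_abs_self l
  unfold subInvNegRoot
  linarith

theorem sq_sub_mul_sub_one_eq_mul (l μ : ℝ) :
    μ ^ 2 - l * μ - 1 = (μ - subInvPosRoot l) * (μ - subInvNegRoot l) := by
  have hsq : √(l ^ 2 + 4) ^ 2 = l ^ 2 + 4 := Real.sq_sqrt (by positivity)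
  unfold subInvPosRoot subInvNegRoot
  linear_combination (1 / 4 : ℝ) * hsq

theorem subInvPosRoot_sub_inv (l : ℝ) : subInvPosRoot l - (subInvPosRoot l)⁻¹ = l :=
  (sq_sub_mul_sub_one_eq_zero_iff.1 (by rw [sq_sub_mul_sub_one_eq_mul]; ring)).2

theorem subInvNegRoot_sub_inv (l : ℝ) : subInvNegRoot l - (subInvNegRoot l)⁻¹ = l :=
  (sq_sub_mul_sub_one_eq_zero_iff.1 (by rw [sq_sub_mul_sub_one_eq_mul]; ring)).2

theorem setOf_sub_inv_mem_eq_union (S : Set ℝ) :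
    {μ : ℝ | μ ≠ 0 ∧ μ - μ⁻¹ ∈ S} = subInvPosRoot '' S ∪ subInvNegRoot '' S := by
  ext μ
  constructor
  · rintro ⟨hμ, hS⟩
    have hroot : μ ^ 2 - (μ - μ⁻¹) * μ - 1 = 0 :=
      sq_sub_mul_sub_one_eq_zero_iff.2 ⟨hμ, rfl⟩
    rw [sq_sub_mul_sub_one_eq_mul, mul_eq_zero, sub_eq_zero, sub_eq_zero] at hroot
    rcases hroot with h | h
    · exact Or.inl ⟨_, hS, h.symm⟩
    · exact Or.inr ⟨_, hS, h.symm⟩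
  · rintro (⟨l, hl, rfl⟩ | ⟨l, hl, rfl⟩)
    · exact ⟨(subInvPosRoot_pos l).ne', by rwa [subInvPosRoot_sub_inv]⟩
    · exact ⟨(subInvNegRoot_neg l).ne, by rwa [subInvNegRoot_sub_inv]⟩

theorem encard_setOf_sub_inv_mem (S : Set ℝ) :
    {μ : ℝ | μ ≠ 0 ∧ μ - μ⁻¹ ∈ S}.encard = 2 * S.encard := by
  have hdisj : Disjoint (subInvPosRoot '' S) (subInvNegRoot '' S) := by
    rw [Set.disjoint_left]
    rintro _ ⟨a, -, rfl⟩ ⟨b, -, hb⟩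
    linarith [subInvPosRoot_pos a, subInvNegRoot_neg b]
  have hpos : subInvPosRoot.Injective :=
    Function.LeftInverse.injective (g := fun μ ↦ μ - μ⁻¹) subInvPosRoot_sub_inv
  have hneg : subInvNegRoot.Injective :=
    Function.LeftInverse.injective (g := fun μ ↦ μ - μ⁻¹) subInvNegRoot_sub_inv
  rw [setOf_sub_inv_mem_eq_union, Set.encard_union_eq hdisj, hpos.encard_image,
    hneg.encard_image, two_mul]

theorem spectrum_rootedProduct_general {V : Type*} [Fintype V] [DecidableEq V]
    (A : Matrix V V ℝ)
    (hsimple : (spectrum ℝ A).ncard = Fintype.card V)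
    (B : Matrix (V ⊕ V) (V ⊕ V) ℝ) (hB : B = Matrix.fromBlocks A 1 1 0) :
    (spectrum ℝ B).ncard = 2 * Fintype.card V ∧
      ∀ μ : ℝ, μ ∈ spectrum ℝ B ↔ ∃ lam ∈ spectrum ℝ A, μ ^ 2 - lam * μ - 1 = 0 := by
  subst hB
  have hspec : spectrum ℝ (Matrix.fromBlocks A 1 1 0) = {μ | μ ≠ 0 ∧ μ - μ⁻¹ ∈ spectrum ℝ A} :=
    Set.ext (Matrix.mem_spectrum_fromBlocks_one_one_zero_iff A)
  refine ⟨?_, Matrix.mem_spectrum_fromBlocks_one_one_zero_iff_exists A⟩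
  rw [hspec, Set.ncard_def, encard_setOf_sub_inv_mem, ENat.toNat_mul, ← Set.ncard_def, hsimple]
  rfl

/-- If the adjacency matrix `A` of a graph on `n` vertices has `n` distinct
eigenvalues, then `B = [[A, I], [I, 0]]` has `2n` distinct eigenvalues, and a real `μ` is an
eigenvalue of `B` iff `μ² − λμ − 1 = 0` for some eigenvalue `λ` of `A`. -/
theorem spectrum_rootedProduct {V : Type*} [Fintype V] [DecidableEq V]
    (G : SimpleGraph V) [DecidableRel G.Adj]
    (A : Matrix V V ℝ) (hA : A = G.adjMatrix ℝ)
    (hsimple : (spectrum ℝ A).ncard = Fintype.card V)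
    (B : Matrix (V ⊕ V) (V ⊕ V) ℝ) (hB : B = Matrix.fromBlocks A 1 1 0) :
    (spectrum ℝ B).ncard = 2 * Fintype.card V ∧
      ∀ μ : ℝ, μ ∈ spectrum ℝ B ↔ ∃ lam ∈ spectrum ℝ A, μ ^ 2 - lam * μ - 1 = 0 :=
  spectrum_rootedProduct_general A hsimple B hB
end

section
/- Let X be a finite simple graph on n vertices whose adjacency matrix A has n distinct eigenvalues λ_1,…,λ_n, with F_i the orthogonal projection onto the λ_i-eigenspace. Let B = [[A, I],[I, 0]] and let N = ∑_{i=1}^n (2/(λ_i² + 4)) (F_i ∘ F_i). Then the average mixing matrix of B is the block matrix M̂(B) = [[M̂(A) − N, N],[N, M̂(A) − N]]. -/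
/-!
`B = ∑ᵢ [[λᵢ, 1], [1, 0]] ⊗ Fᵢ` (Kronecker product written in blocks). The `2 × 2` matrix
`[[λ, 1], [1, 0]]` has the eigenvalues `θ` with `θ² = λθ + 1`, one positive and one negative with
product `-1`, and the eigenvector `(θ, 1)`. Hence `B` has the spectral decomposition
`∑_{i, ±} θᵢ± (Pᵢ± ⊗ Fᵢ)` with `P±` the projections onto the lines through `(θ±, 1)`; its
eigenvalues are distinct because `θ - θ⁻¹ = λ` recovers `i` and the sign of `θ` recovers `±`.
Spectral decompositions with distinct eigenvalues are unique, so `M̂(B)` can be computed from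
this one: it is `∑ᵢ (P₊ ⊙ P₊ + P₋ ⊙ P₋) ⊗ (Fᵢ ⊙ Fᵢ)`, and the `2 × 2` factor equals
`[[1 - c, c], [c, 1 - c]]` with `c = 2 / (λ² + 4)`.
-/

open scoped Matrix
open Matrix

theorem Finset.sum_ite_eq_of_injective {α κ M : Type*} [Fintype κ] [DecidableEq α]
    [AddCommMonoid M] {θ : κ → α} (hθ : Function.Injective θ) (a : α) (x : M)
    (hx : (∀ t, θ t ≠ a) → x = 0) : ∑ t, (if θ t = a then x else 0) = x := by
  by_cases ha : ∃ t, θ t = a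
  · obtain ⟨t₀, rfl⟩ := ha
    exact (Fintype.sum_eq_single t₀ fun t ht => if_neg (hθ.ne ht)).trans (if_pos rfl)
  · push Not at ha
    simp [hx ha]

section SpectralDecomposition

variable {K R ι κ : Type*} [Field K] [Ring R] [Algebra K R] [Fintype ι] [Fintype κ]
  {μ : ι → K} {θ : κ → K} {E : ι → R} {G : κ → R}

namespace OrthogonalIdempotents

theorem mul_sum_smul (hE : OrthogonalIdempotents E) (μ : ι → K) (r : ι) :
    E r * ∑ s, μ s • E s = μ r • E r := by
  classical
  simp [Finset.mul_sum, hE.mul_eq]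

theorem sum_smul_mul (hE : OrthogonalIdempotents E) (μ : ι → K) (r : ι) :
    (∑ s, μ s • E s) * E r = μ r • E r := by
  classical
  simp [Finset.sum_mul, hE.mul_eq]

theorem mul_eq_zero_of_sum_smul_eq (hE : OrthogonalIdempotents E)
    (hG : OrthogonalIdempotents G) (h : ∑ r, μ r • E r = ∑ t, θ t • G t) {r : ι} {t : κ}
    (hrt : μ r ≠ θ t) : E r * G t = 0 := by
  have key : μ r • (E r * G t) = θ t • (E r * G t) := by
    rw [← smul_mul_assoc, ← hE.mul_sum_smul, h, mul_assoc, hG.sum_smul_mul, mul_smul_comm]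
  rw [← sub_eq_zero, ← sub_smul] at key
  exact (smul_eq_zero.mp key).resolve_left (sub_ne_zero.mpr hrt)

theorem eq_zero_of_sum_smul_eq (hE : OrthogonalIdempotents E)
    (hG : CompleteOrthogonalIdempotents G) (h : ∑ r, μ r • E r = ∑ t, θ t • G t) {r : ι}
    (hr : ∀ t, μ r ≠ θ t) : E r = 0 := by
  rw [← mul_one (E r), ← hG.complete, Finset.mul_sum]
  exact Finset.sum_eq_zero fun t _ => hE.mul_eq_zero_of_sum_smul_eq hG.1 h (hr t)

end OrthogonalIdempotents

namespace CompleteOrthogonalIdempotents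

theorem eq_of_sum_smul_eq (hE : CompleteOrthogonalIdempotents E)
    (hG : CompleteOrthogonalIdempotents G) (hμ : Function.Injective μ)
    (hθ : Function.Injective θ) (h : ∑ r, μ r • E r = ∑ t, θ t • G t) {r : ι} {t : κ}
    (hrt : μ r = θ t) : E r = G t := by
  have hE_eq : E r * G t = E r := by
    rw [← Fintype.sum_eq_single t fun u hu =>
      hE.1.mul_eq_zero_of_sum_smul_eq hG.1 h fun h' => hu (hθ (h'.symm.trans hrt)),
      ← Finset.mul_sum, hG.complete, mul_one]
  have hG_eq : E r * G t = G t := by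
    rw [← Fintype.sum_eq_single r fun s hs =>
      hE.1.mul_eq_zero_of_sum_smul_eq hG.1 h fun h' => hs (hμ (h'.trans hrt.symm)),
      ← Finset.sum_mul, hE.complete, one_mul]
  exact hE_eq.symm.trans hG_eq

theorem sum_map_eq_of_sum_smul_eq {M : Type*} [AddCommMonoid M]
    (hE : CompleteOrthogonalIdempotents E) (hG : CompleteOrthogonalIdempotents G)
    (hμ : Function.Injective μ) (hθ : Function.Injective θ)
    (h : ∑ r, μ r • E r = ∑ t, θ t • G t) (f : R → M) (hf : f 0 = 0) :
    ∑ r, f (E r) = ∑ t, f (G t) := by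
  classical
  calc ∑ r, f (E r) = ∑ r, ∑ t, if θ t = μ r then f (E r) else 0 := by
        refine Finset.sum_congr rfl fun r _ =>
          (Finset.sum_ite_eq_of_injective hθ _ _ fun hr => ?_).symm
        rw [hE.1.eq_zero_of_sum_smul_eq hG h fun t ht => hr t ht.symm, hf]
    _ = ∑ t, ∑ r, if μ r = θ t then f (G t) else 0 := by
        rw [Finset.sum_comm]
        refine Finset.sum_congr rfl fun t _ => Finset.sum_congr rfl fun r _ => ?_
        by_cases hrt : μ r = θ t
        · simp [hrt, hE.eq_of_sum_smul_eq hG hμ hθ h hrt]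
        · simp [hrt, Ne.symm hrt]
    _ = ∑ t, f (G t) := by
        refine Finset.sum_congr rfl fun t _ =>
          Finset.sum_ite_eq_of_injective hμ _ _ fun ht => ?_
        rw [hG.1.eq_zero_of_sum_smul_eq hE h.symm fun r hr => ht r hr.symm, hf]

end CompleteOrthogonalIdempotents

end SpectralDecomposition

namespace Matrix

variable {K l m n o ι : Type*}

theorem fromBlocks_sum [AddCommMonoid K] (s : Finset ι) (A : ι → Matrix n l K)
    (B : ι → Matrix n m K) (C : ι → Matrix o l K) (D : ι → Matrix o m K) :
    ∑ i ∈ s, fromBlocks (A i) (B i) (C i) (D i) =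
      fromBlocks (∑ i ∈ s, A i) (∑ i ∈ s, B i) (∑ i ∈ s, C i) (∑ i ∈ s, D i) := by
  ext (x | x) (y | y) <;> simp [Matrix.sum_apply]

def blockKronecker [Mul K] (P : Matrix (Fin 2) (Fin 2) K) (M : Matrix m n K) :
    Matrix (m ⊕ m) (n ⊕ n) K :=
  fromBlocks (P 0 0 • M) (P 0 1 • M) (P 1 0 • M) (P 1 1 • M)

section CommRing

variable [CommRing K]

theorem blockKronecker_mul [Fintype m] (P Q : Matrix (Fin 2) (Fin 2) K) (M : Matrix l m K)
    (N : Matrix m n K) :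
    blockKronecker P M * blockKronecker Q N = blockKronecker (P * Q) (M * N) := by
  simp only [blockKronecker, fromBlocks_multiply, Matrix.smul_mul, Matrix.mul_smul, smul_smul,
    ← add_smul, Matrix.mul_apply, Fin.sum_univ_two, mul_comm (Q _ _)]

theorem blockKronecker_hadamard (P Q : Matrix (Fin 2) (Fin 2) K) (M N : Matrix m n K) :
    blockKronecker P M ⊙ blockKronecker Q N = blockKronecker (P ⊙ Q) (M ⊙ N) := by
  ext (i | i) (j | j) <;> simp [blockKronecker, mul_mul_mul_comm]

theorem blockKronecker_smul (c : K) (P : Matrix (Fin 2) (Fin 2) K) (M : Matrix m n K) :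
    c • blockKronecker P M = blockKronecker (c • P) M := by
  simp [blockKronecker, fromBlocks_smul, smul_smul]

@[simp]
theorem blockKronecker_zero_left (M : Matrix m n K) : blockKronecker 0 M = 0 := by
  simp [blockKronecker]

@[simp]
theorem blockKronecker_zero_right (P : Matrix (Fin 2) (Fin 2) K) :
    blockKronecker P (0 : Matrix m n K) = 0 := by
  simp [blockKronecker]

@[simp]
theorem blockKronecker_one [DecidableEq n] : blockKronecker 1 (1 : Matrix n n K) = 1 := by
  simp [blockKronecker, fromBlocks_one]

theorem blockKronecker_sum_left (s : Finset ι) (P : ι → Matrix (Fin 2) (Fin 2) K)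
    (M : Matrix m n K) :
    blockKronecker (∑ i ∈ s, P i) M = ∑ i ∈ s, blockKronecker (P i) M := by
  simp only [blockKronecker, fromBlocks_sum, Matrix.sum_apply, Finset.sum_smul]

theorem blockKronecker_sum_right (s : Finset ι) (P : Matrix (Fin 2) (Fin 2) K)
    (M : ι → Matrix m n K) :
    blockKronecker P (∑ i ∈ s, M i) = ∑ i ∈ s, blockKronecker P (M i) := by
  simp only [blockKronecker, fromBlocks_sum, Finset.smul_sum]

end CommRing

end Matrix

theorem CompleteOrthogonalIdempotents.blockKronecker_prod {K n ι κ : Type*} [CommRing K]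
    [Fintype n] [DecidableEq n] [Fintype ι] [Fintype κ] {P : ι → κ → Matrix (Fin 2) (Fin 2) K}
    {F : ι → Matrix n n K} (hP : ∀ i, CompleteOrthogonalIdempotents (P i))
    (hF : CompleteOrthogonalIdempotents F) :
    CompleteOrthogonalIdempotents fun p : ι × κ => blockKronecker (P p.1 p.2) (F p.1) := by
  refine CompleteOrthogonalIdempotents.iff_ortho_complete.2 ⟨?_, ?_⟩
  · rintro ⟨i, b⟩ ⟨j, c⟩ hne
    simp only [blockKronecker_mul]
    by_cases hij : i = j
    · subst hij
      rw [(hP i).ortho fun hbc => hne (by rw [hbc]), blockKronecker_zero_left]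
    · rw [hF.ortho hij, blockKronecker_zero_right]
  · simp [Fintype.sum_prod_type, ← blockKronecker_sum_left, (hP _).complete,
      ← blockKronecker_sum_right, hF.complete]

theorem eq_neg_inv_of_mul_eq_neg_one {K : Type*} [DivisionRing K] {x y : K} (h : x * y = -1) :
    y = -x⁻¹ := by
  rw [inv_eq_of_mul_eq_one_right (b := -y) (by rw [mul_neg, h, neg_neg]), neg_neg]

noncomputable section

/-- Orthogonal projection of `ℝ²` onto the line spanned by `(x, 1)`. -/
def lineProj (x : ℝ) : Matrix (Fin 2) (Fin 2) ℝ := (x ^ 2 + 1)⁻¹ • !![x ^ 2, x; x, 1]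

theorem lineProj_mul_self (x : ℝ) : lineProj x * lineProj x = lineProj x := by
  have : x ^ 2 + 1 ≠ 0 := by positivity
  ext i j
  fin_cases i <;> fin_cases j <;> simp [lineProj, Matrix.mul_apply] <;> field_simp

theorem lineProj_mul_eq_zero {x y : ℝ} (hxy : x * y = -1) : lineProj x * lineProj y = 0 := by
  have hx : x ≠ 0 := left_ne_zero_of_mul (by rw [hxy]; norm_num)
  obtain rfl := eq_neg_inv_of_mul_eq_neg_one hxy
  have : x ^ 2 + 1 ≠ 0 := by positivity
  ext i j
  fin_cases i <;> fin_cases j <;> simp [lineProj, Matrix.mul_apply] <;> field_simp <;> ring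

theorem lineProj_add_eq_one {x y : ℝ} (hxy : x * y = -1) : lineProj x + lineProj y = 1 := by
  have hx : x ≠ 0 := left_ne_zero_of_mul (by rw [hxy]; norm_num)
  obtain rfl := eq_neg_inv_of_mul_eq_neg_one hxy
  have : x ^ 2 + 1 ≠ 0 := by positivity
  ext i j
  fin_cases i <;> fin_cases j <;> simp [lineProj] <;> field_simp <;> ring

theorem smul_lineProj_add_smul_lineProj {x y : ℝ} (hxy : x * y = -1) :
    x • lineProj x + y • lineProj y = !![x + y, 1; 1, 0] := by
  have hx : x ≠ 0 := left_ne_zero_of_mul (by rw [hxy]; norm_num)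
  obtain rfl := eq_neg_inv_of_mul_eq_neg_one hxy
  have : x ^ 2 + 1 ≠ 0 := by positivity
  ext i j
  fin_cases i <;> fin_cases j <;> simp [lineProj] <;> field_simp <;> ring

theorem lineProj_hadamard_self_add {x y : ℝ} (hxy : x * y = -1) :
    lineProj x ⊙ lineProj x + lineProj y ⊙ lineProj y =
      !![1 - 2 / ((x + y) ^ 2 + 4), 2 / ((x + y) ^ 2 + 4);
        2 / ((x + y) ^ 2 + 4), 1 - 2 / ((x + y) ^ 2 + 4)] := by
  have hx : x ≠ 0 := left_ne_zero_of_mul (by rw [hxy]; norm_num)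
  obtain rfl := eq_neg_inv_of_mul_eq_neg_one hxy
  have : x ^ 2 + 1 ≠ 0 := by positivity
  have : (x + -x⁻¹) ^ 2 + 4 ≠ 0 := by positivity
  ext i j
  fin_cases i <;> fin_cases j <;> simp [lineProj] <;> field_simp <;> ring

/-- The two roots of `θ ^ 2 = l * θ + 1`, i.e. the eigenvalues of `!![l, 1; 1, 0]`. -/
def quadRoot (l : ℝ) (b : Bool) : ℝ := (l + cond b 1 (-1) * √(l ^ 2 + 4)) / 2

theorem quadRoot_true_mul_false (l : ℝ) : quadRoot l true * quadRoot l false = -1 := by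
  have h := Real.sq_sqrt (by positivity : (0 : ℝ) ≤ l ^ 2 + 4)
  simp only [quadRoot, cond_true, cond_false]
  linear_combination (-1 / 4 : ℝ) * h

theorem quadRoot_true_add_false (l : ℝ) : quadRoot l true + quadRoot l false = l := by
  simp only [quadRoot, cond_true, cond_false]
  ring

theorem quadRoot_pos_iff {l : ℝ} {b : Bool} : 0 < quadRoot l b ↔ b = true := by
  have hl : |l| < √(l ^ 2 + 4) := by
    rw [← Real.sqrt_sq_eq_abs]
    exact Real.sqrt_lt_sqrt (sq_nonneg l) (by linarith)
  obtain ⟨hl₁, hl₂⟩ := abs_lt.mp hl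
  cases b <;> simp only [quadRoot, cond_true, cond_false, Bool.false_eq_true, iff_true, iff_false,
    not_lt] <;> linarith

theorem quadRoot_sub_inv (l : ℝ) (b : Bool) : quadRoot l b - (quadRoot l b)⁻¹ = l := by
  have h := quadRoot_true_mul_false l
  cases b
  · linear_combination quadRoot_true_add_false l -
      eq_neg_inv_of_mul_eq_neg_one ((mul_comm _ _).trans h)
  · linear_combination quadRoot_true_add_false l - eq_neg_inv_of_mul_eq_neg_one h

theorem quadRoot_injective : Function.Injective fun p : ℝ × Bool => quadRoot p.1 p.2 := by
  rintro ⟨l, b⟩ ⟨l', b'⟩ (h : quadRoot l b = quadRoot l' b')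
  have hl : l = l' := by rw [← quadRoot_sub_inv l b, ← quadRoot_sub_inv l' b', h]
  have hb : b = b' := Bool.eq_iff_iff.2 <|
    (quadRoot_pos_iff (l := l)).symm.trans (by rw [h]; exact quadRoot_pos_iff)
  rw [hl, hb]

theorem completeOrthogonalIdempotents_lineProj_quadRoot (l : ℝ) :
    CompleteOrthogonalIdempotents fun b => lineProj (quadRoot l b) := by
  refine ⟨⟨fun b => lineProj_mul_self _, ?_⟩, ?_⟩
  · rintro (_ | _) (_ | _) hne
    · exact absurd rfl hne
    · exact lineProj_mul_eq_zero ((mul_comm _ _).trans (quadRoot_true_mul_false l))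
    · exact lineProj_mul_eq_zero (quadRoot_true_mul_false l)
    · exact absurd rfl hne
  · rw [Fintype.sum_bool, lineProj_add_eq_one (quadRoot_true_mul_false l)]

theorem sum_smul_lineProj_quadRoot (l : ℝ) :
    ∑ b, quadRoot l b • lineProj (quadRoot l b) = !![l, 1; 1, 0] := by
  rw [Fintype.sum_bool, smul_lineProj_add_smul_lineProj (quadRoot_true_mul_false l),
    quadRoot_true_add_false]

theorem sum_lineProj_hadamard_self_quadRoot (l : ℝ) :
    ∑ b, lineProj (quadRoot l b) ⊙ lineProj (quadRoot l b) =
      !![1 - 2 / (l ^ 2 + 4), 2 / (l ^ 2 + 4); 2 / (l ^ 2 + 4), 1 - 2 / (l ^ 2 + 4)] := by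
  rw [Fintype.sum_bool, lineProj_hadamard_self_add (quadRoot_true_mul_false l),
    quadRoot_true_add_false]

end

theorem avgMixing_rootedProduct_general {V : Type*} [Fintype V] [DecidableEq V]
    (A : Matrix V V ℝ)
    (lam : V → ℝ) (hlam : Function.Injective lam)
    (F : V → Matrix V V ℝ)
    (hForth : ∀ i j, F i * F j = if i = j then F i else 0)
    (hFsum : ∑ i, F i = 1)
    (hAdecomp : A = ∑ i, lam i • F i)
    (B : Matrix (V ⊕ V) (V ⊕ V) ℝ) (hB : B = Matrix.fromBlocks A 1 1 0)
    (m : ℕ) (μ : Fin m → ℝ) (hμ : Function.Injective μ)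
    (E : Fin m → Matrix (V ⊕ V) (V ⊕ V) ℝ)
    (hEorth : ∀ r s, E r * E s = if r = s then E r else 0)
    (hEsum : ∑ r, E r = 1)
    (hBdecomp : B = ∑ r, μ r • E r) :
    ∑ r, E r ⊙ E r =
      Matrix.fromBlocks
        ((∑ i, F i ⊙ F i) - ∑ i, (2 / (lam i ^ 2 + 4)) • (F i ⊙ F i))
        (∑ i, (2 / (lam i ^ 2 + 4)) • (F i ⊙ F i))
        (∑ i, (2 / (lam i ^ 2 + 4)) • (F i ⊙ F i))
        ((∑ i, F i ⊙ F i) - ∑ i, (2 / (lam i ^ 2 + 4)) • (F i ⊙ F i)) := by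
  have hF : CompleteOrthogonalIdempotents F := ⟨OrthogonalIdempotents.iff_mul_eq.2 hForth, hFsum⟩
  have hE : CompleteOrthogonalIdempotents E := ⟨OrthogonalIdempotents.iff_mul_eq.2 hEorth, hEsum⟩
  have hG := CompleteOrthogonalIdempotents.blockKronecker_prod
    (P := fun i b => lineProj (quadRoot (lam i) b))
    (fun i => completeOrthogonalIdempotents_lineProj_quadRoot (lam i)) hF
  have hθ : Function.Injective fun p : V × Bool => quadRoot (lam p.1) p.2 :=
    quadRoot_injective.comp (hlam.prodMap Function.injective_id)
  have hBG : ∑ r, μ r • E r = ∑ p : V × Bool,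
      quadRoot (lam p.1) p.2 • blockKronecker (lineProj (quadRoot (lam p.1) p.2)) (F p.1) := by
    simp_rw [← hBdecomp, hB, blockKronecker_smul, Fintype.sum_prod_type,
      ← blockKronecker_sum_left, sum_smul_lineProj_quadRoot]
    simp [blockKronecker, fromBlocks_sum, hAdecomp, hFsum]
  rw [hE.sum_map_eq_of_sum_smul_eq hG hμ hθ hBG (fun X => X ⊙ X) (zero_hadamard _)]
  simp_rw [blockKronecker_hadamard, Fintype.sum_prod_type, ← blockKronecker_sum_left,
    sum_lineProj_hadamard_self_quadRoot]
  simp [blockKronecker, fromBlocks_sum, sub_smul, Finset.sum_sub_distrib]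

/-- If `A` (adjacency matrix of a graph on `n` vertices) has `n` distinct
eigenvalues `λ i` with rank-one spectral projections `F i`, and
`N = ∑ (2/(λ i² + 4)) • (F i ⊙ F i)`, then the average mixing matrix of
`B = [[A, I], [I, 0]]` is the block matrix `[[M̂(A) − N, N], [N, M̂(A) − N]]`. -/
theorem avgMixing_rootedProduct {V : Type*} [Fintype V] [DecidableEq V]
    (G : SimpleGraph V) [DecidableRel G.Adj]
    (A : Matrix V V ℝ) (hA : A = G.adjMatrix ℝ)
    (lam : V → ℝ) (hlam : Function.Injective lam)
    (F : V → Matrix V V ℝ)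
    (hFsymm : ∀ i, (F i).IsSymm)
    (hForth : ∀ i j, F i * F j = if i = j then F i else 0)
    (hFne : ∀ i, F i ≠ 0)
    (hFsum : ∑ i, F i = 1)
    (hAdecomp : A = ∑ i, lam i • F i)
    (B : Matrix (V ⊕ V) (V ⊕ V) ℝ) (hB : B = Matrix.fromBlocks A 1 1 0)
    (m : ℕ) (μ : Fin m → ℝ) (hμ : Function.Injective μ)
    (E : Fin m → Matrix (V ⊕ V) (V ⊕ V) ℝ)
    (hEsymm : ∀ r, (E r).IsSymm)
    (hEorth : ∀ r s, E r * E s = if r = s then E r else 0)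
    (hEsum : ∑ r, E r = 1)
    (hBdecomp : B = ∑ r, μ r • E r) :
    ∑ r, E r ⊙ E r =
      Matrix.fromBlocks
        ((∑ i, F i ⊙ F i) - ∑ i, (2 / (lam i ^ 2 + 4)) • (F i ⊙ F i))
        (∑ i, (2 / (lam i ^ 2 + 4)) • (F i ⊙ F i))
        (∑ i, (2 / (lam i ^ 2 + 4)) • (F i ⊙ F i))
        ((∑ i, F i ⊙ F i) - ∑ i, (2 / (lam i ^ 2 + 4)) • (F i ⊙ F i)) :=
  avgMixing_rootedProduct_general A lam hlam F hForth hFsum hAdecomp B hB m μ hμ E hEorth hEsum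
    hBdecomp
end

section
/- Let A be a real symmetric n × n matrix with n distinct eigenvalues λ_1,…,λ_n, with F_i the orthogonal projection onto the λ_i-eigenspace, and let N = ∑_{i=1}^n (2/(λ_i² + 4)) (F_i ∘ F_i). Then N and the average mixing matrix M̂ = ∑_{i=1}^n F_i ∘ F_i have the same kernel. -/
/-!
An orthogonal projection is positive semidefinite, hence so is its Schur square `F i ⊙ F i`
by the Schur product theorem. For positive semidefinite `Pᵢ` and weights `cᵢ > 0`, the quadratic
form of `∑ cᵢ Pᵢ` at `x` is a sum of nonnegative terms `cᵢ x⋆ Pᵢ x`, so `x` lies in the kernel of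
`∑ cᵢ Pᵢ` iff `x⋆ Pᵢ x = 0`, i.e. `Pᵢ x = 0`, for every `i`. Thus both `N` and `M̂` have kernel
`⋂ᵢ ker (F i ⊙ F i)`.
-/

open scoped Matrix ComplexOrder

namespace Matrix

variable {ι n 𝕜 : Type*} [Fintype ι] [Fintype n] [RCLike 𝕜]

theorem PosSemidef.of_isStarProjection {P : Matrix n n 𝕜} (hP : IsStarProjection P) :
    P.PosSemidef := by
  open MatrixOrder in exact nonneg_iff_posSemidef.mp hP.nonneg

theorem PosSemidef.sum_mulVec_eq_zero_iff {M : ι → Matrix n n 𝕜} (hM : ∀ i, (M i).PosSemidef)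
    (x : n → 𝕜) : (∑ i, M i) *ᵥ x = 0 ↔ ∀ i, M i *ᵥ x = 0 := by
  refine ⟨fun h i => ?_, fun h => by simp [sum_mulVec, h]⟩
  have hquad : ∑ j, star x ⬝ᵥ M j *ᵥ x = 0 := by
    rw [← dotProduct_sum, ← sum_mulVec, h, dotProduct_zero]
  rw [← (hM i).dotProduct_mulVec_zero_iff]
  exact (Finset.sum_eq_zero_iff_of_nonneg fun j _ => (hM j).dotProduct_mulVec_nonneg x).mp
    hquad i (Finset.mem_univ i)

theorem PosSemidef.sum_smul_mulVec_eq_zero_iff {M : ι → Matrix n n 𝕜}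
    (hM : ∀ i, (M i).PosSemidef) {c : ι → ℝ} (hc : ∀ i, 0 < c i) (x : n → 𝕜) :
    (∑ i, c i • M i) *ᵥ x = 0 ↔ ∀ i, M i *ᵥ x = 0 := by
  rw [sum_mulVec_eq_zero_iff fun i => (hM i).smul (hc i).le]
  simp only [smul_mulVec, smul_eq_zero, (hc _).ne', false_or]

end Matrix

theorem kernel_N_eq_kernel_avgMixing_general {n : ℕ}
    (lam : Fin n → ℝ)
    (F : Fin n → Matrix (Fin n) (Fin n) ℝ)
    (hFsymm : ∀ i, (F i).IsSymm)
    (hForth : ∀ i j, F i * F j = if i = j then F i else 0) :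
    ∀ x : Fin n → ℝ,
      (∑ i, (2 / (lam i ^ 2 + 4)) • (F i ⊙ F i)) *ᵥ x = 0 ↔
        (∑ i, F i ⊙ F i) *ᵥ x = 0 := by
  intro x
  have hF : ∀ i, (F i).PosSemidef := fun i =>
    .of_isStarProjection ⟨by simpa [IsIdempotentElem] using hForth i i, hFsymm i⟩
  have hFF : ∀ i, (F i ⊙ F i).PosSemidef := fun i => (hF i).hadamard (hF i)
  rw [Matrix.PosSemidef.sum_smul_mulVec_eq_zero_iff hFF fun i => by positivity,
    Matrix.PosSemidef.sum_mulVec_eq_zero_iff hFF]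

/-- For a real symmetric `n × n` matrix `A` with `n` distinct eigenvalues
`λ i` and spectral projections `F i`, the matrix `N = ∑ (2/(λ i² + 4)) • (F i ⊙ F i)` has the
same kernel as the average mixing matrix `M̂ = ∑ F i ⊙ F i`. -/
theorem kernel_N_eq_kernel_avgMixing {n : ℕ}
    (A : Matrix (Fin n) (Fin n) ℝ) (hA : A.IsSymm)
    (lam : Fin n → ℝ) (hlam : Function.Injective lam)
    (F : Fin n → Matrix (Fin n) (Fin n) ℝ)
    (hFsymm : ∀ i, (F i).IsSymm)
    (hForth : ∀ i j, F i * F j = if i = j then F i else 0)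
    (hFne : ∀ i, F i ≠ 0)
    (hFsum : ∑ i, F i = 1)
    (hAdecomp : A = ∑ i, lam i • F i) :
    ∀ x : Fin n → ℝ,
      (∑ i, (2 / (lam i ^ 2 + 4)) • (F i ⊙ F i)) *ᵥ x = 0 ↔
        (∑ i, F i ⊙ F i) *ᵥ x = 0 :=
  kernel_N_eq_kernel_avgMixing_general lam F hFsymm hForth
end

section
/- Let X be a finite simple graph with adjacency matrix A and spectral decomposition A = ∑_{r=1}^d θ_r E_r, and let M̂ be its average mixing matrix. For vertices u and v with standard basis vectors e_u, e_v, one has M̂e_u = M̂e_v if and only if u and v are strongly cospectral, i.e., for every r, E_r e_u = E_r e_v or E_r e_u = −E_r e_v. -/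
/-!
Write `x = E e_u`, `y = E e_v` for a symmetric idempotent `E`. Then `x ⬝ x = E_uu`, `y ⬝ y = E_vv`
and `x ⬝ y = E_uv`, so Cauchy–Schwarz gives `E_uv² ≤ E_uu E_vv`, and
`‖x - y‖² ‖x + y‖² = (E_uu + E_vv)² - 4 E_uv²` vanishes exactly when `x = ± y`.
Equal columns of `M̂` give, at the entries `u` and `v`, `∑ E_r,uu² + ∑ E_r,vv² = 2 ∑ E_r,uv²`;
against Cauchy–Schwarz this forces `E_r,uu = E_r,vv` and `E_r,uv² = E_r,uu E_r,vv` for every `r`.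
-/

open scoped Matrix

open Finset

theorem eq_and_sq_eq_mul_of_sum_sq_add_sum_sq_eq {ι : Type*} (s : Finset ι) {a b c : ι → ℝ}
    (hc : ∀ i ∈ s, c i ^ 2 ≤ a i * b i)
    (hsum : ∑ i ∈ s, a i ^ 2 + ∑ i ∈ s, b i ^ 2 = 2 * ∑ i ∈ s, c i ^ 2) :
    ∀ i ∈ s, a i = b i ∧ c i ^ 2 = a i * b i := by
  have hzero : ∑ i ∈ s, ((a i - b i) ^ 2 + 2 * (a i * b i - c i ^ 2)) = 0 := by
    have hexp : ∀ i, (a i - b i) ^ 2 + 2 * (a i * b i - c i ^ 2)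
        = a i ^ 2 + b i ^ 2 - 2 * c i ^ 2 := fun i => by ring
    simp only [hexp, sum_sub_distrib, sum_add_distrib, ← mul_sum]
    linarith
  intro i hi
  have hnonneg : ∀ j ∈ s, 0 ≤ (a j - b j) ^ 2 + 2 * (a j * b j - c j ^ 2) := fun j hj =>
    add_nonneg (sq_nonneg _) (by linarith [hc j hj])
  have hi0 := (sum_eq_zero_iff_of_nonneg hnonneg).1 hzero i hi
  constructor <;> nlinarith [sq_nonneg (a i - b i), hc i hi]

namespace Matrix

variable {n : Type*} [Fintype n]

theorem eq_or_eq_neg_of_dotProduct_self_eq {x y : n → ℝ} (hnorm : x ⬝ᵥ x = y ⬝ᵥ y)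
    (hcs : (x ⬝ᵥ y) ^ 2 = (x ⬝ᵥ x) * (y ⬝ᵥ y)) : x = y ∨ x = -y := by
  have hprod : ((x - y) ⬝ᵥ (x - y)) * ((x + y) ⬝ᵥ (x + y)) = 0 := by
    simp only [sub_dotProduct, dotProduct_sub, add_dotProduct, dotProduct_add, dotProduct_comm y x]
    linear_combination (x ⬝ᵥ x - y ⬝ᵥ y) * hnorm - 4 * hcs
  rcases mul_eq_zero.1 hprod with h | h
  · exact Or.inl (sub_eq_zero.1 (dotProduct_self_eq_zero.1 h))
  · exact Or.inr (eq_neg_of_add_eq_zero_left (dotProduct_self_eq_zero.1 h))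

theorem sum_hadamard_self_mulVec_single {ι m R : Type*} [CommSemiring R] [DecidableEq n]
    (s : Finset ι) (A : ι → Matrix m n R) (j : n) :
    (∑ r ∈ s, A r ⊙ A r) *ᵥ Pi.single j 1 = ∑ r ∈ s, (A r).col j ^ 2 := by
  ext w
  simp [sum_apply, Finset.sum_apply, sq]

namespace IsSymm

variable {P : Matrix n n ℝ}

theorem col_dotProduct_col (hP : P.IsSymm) (hidem : P * P = P) (i j : n) :
    P.col i ⬝ᵥ P.col j = P i j := by
  rw [← congrFun₂ hidem i j, mul_apply]
  exact sum_congr rfl fun w _ => by rw [col_apply, col_apply, hP.apply i w]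

theorem sq_apply_le_mul_apply_diag (hP : P.IsSymm) (hidem : P * P = P) (i j : n) :
    P i j ^ 2 ≤ P i i * P j j := by
  simp only [← hP.col_dotProduct_col hidem]
  simpa only [dotProduct, sq] using sum_mul_sq_le_sq_mul_sq univ (P.col i) (P.col j)

end IsSymm

end Matrix

theorem avgMixing_columns_eq_iff_stronglyCospectral_general {V : Type*} [Fintype V] [DecidableEq V]
    (d : ℕ)
    (E : Fin d → Matrix V V ℝ)
    (hsymm : ∀ r, (E r).IsSymm)
    (horth : ∀ r s, E r * E s = if r = s then E r else 0)
    (u v : V) :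
    (∑ r, E r ⊙ E r) *ᵥ Pi.single u 1 = (∑ r, E r ⊙ E r) *ᵥ Pi.single v 1 ↔
      ∀ r, E r *ᵥ Pi.single u 1 = E r *ᵥ Pi.single v 1 ∨
        E r *ᵥ Pi.single u 1 = -(E r *ᵥ Pi.single v 1) := by
  have hidem : ∀ r, E r * E r = E r := fun r => by simpa using horth r r
  rw [Matrix.sum_hadamard_self_mulVec_single, Matrix.sum_hadamard_self_mulVec_single]
  simp only [Matrix.mulVec_single_one]
  constructor
  · intro h r
    have hcol : ∀ w, ∑ s, E s w u ^ 2 = ∑ s, E s w v ^ 2 := fun w => by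
      simpa [Finset.sum_apply] using congrFun h w
    have hsum : ∑ s, E s u u ^ 2 + ∑ s, E s v v ^ 2 = 2 * ∑ s, E s u v ^ 2 := by
      have hcol_v := hcol v
      simp only [fun s => (hsymm s).apply u v] at hcol_v
      linarith [hcol u]
    obtain ⟨hdiag, hcs⟩ := eq_and_sq_eq_mul_of_sum_sq_add_sum_sq_eq univ
      (fun s _ => (hsymm s).sq_apply_le_mul_apply_diag (hidem s) u v) hsum r (mem_univ r)
    apply Matrix.eq_or_eq_neg_of_dotProduct_self_eq <;>
      simpa only [(hsymm r).col_dotProduct_col (hidem r)]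
  · intro h
    refine sum_congr rfl fun r _ => ?_
    rcases h r with h | h <;> simp [h]

/-- For a graph `X` with adjacency matrix `A = ∑ θ r • E r` and average
mixing matrix `M̂ = ∑ E r ⊙ E r`, two vertices `u, v` satisfy `M̂ e_u = M̂ e_v` iff they are
strongly cospectral, i.e. `E r e_u = ± E r e_v` for every `r`. -/
theorem avgMixing_columns_eq_iff_stronglyCospectral {V : Type*} [Fintype V] [DecidableEq V]
    (G : SimpleGraph V) [DecidableRel G.Adj]
    (A : Matrix V V ℝ) (hA : A = G.adjMatrix ℝ)
    (d : ℕ) (θ : Fin d → ℝ) (hθ : Function.Injective θ)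
    (E : Fin d → Matrix V V ℝ)
    (hsymm : ∀ r, (E r).IsSymm)
    (horth : ∀ r s, E r * E s = if r = s then E r else 0)
    (hsum : ∑ r, E r = 1)
    (hdecomp : A = ∑ r, θ r • E r)
    (u v : V) :
    (∑ r, E r ⊙ E r) *ᵥ Pi.single u 1 = (∑ r, E r ⊙ E r) *ᵥ Pi.single v 1 ↔
      ∀ r, E r *ᵥ Pi.single u 1 = E r *ᵥ Pi.single v 1 ∨
        E r *ᵥ Pi.single u 1 = -(E r *ᵥ Pi.single v 1) :=
  avgMixing_columns_eq_iff_stronglyCospectral_general d E hsymm horth u v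
end

section
/- Let X be a finite simple graph on n vertices whose adjacency matrix A has n distinct eigenvalues, and let B = [[A, I],[I, 0]] be the adjacency matrix of the rooted product X(K_2). Then rank(M̂(B)) ≤ 2·rank(M̂(A)); equivalently, the kernel of M̂(B) has dimension at least twice the dimension of the kernel of M̂(A). -/
/-!
The `n` idempotents `F i` sum to the identity and the rank of an idempotent is its trace, so
each `F i` has rank one. Comparing blocks in `B E = E B = μ E` shows that a spectral idempotent
of `B` has the form `[[μ² R, μ R], [μ R, R]]` with `A R = R A = θ R`; by injectivity of the
eigenvalues `R` is then `F i R F i` for the unique `i` with `λ i = θ` (or zero), i.e. a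
multiple of `F i`. Each `F i ⊙ F i` is positive semidefinite (Schur product theorem), so a vector
in the kernel of `M̂(A) = ∑ F i ⊙ F i` is killed by every `F i ⊙ F i`, hence `x ⊕ y` is killed
by `M̂(B)` whenever `x, y ∈ ker M̂(A)`. Thus `dim ker M̂(B) ≥ 2 dim ker M̂(A)`, which is the rank
bound by rank–nullity.
-/

open Matrix Module
open scoped ComplexOrder

namespace OrthogonalIdempotents

variable {K R ι : Type*} [Field K] [Ring R] [Algebra K R] [Fintype ι] {e : ι → R}
  (he : OrthogonalIdempotents e) (c : ι → K)
include he

theorem sum_smul_mul_s9 (j : ι) : (∑ i, c i • e i) * e j = c j • e j := by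
  classical
  simp [Finset.sum_mul, he.mul_eq]

theorem mul_sum_smul_s9 (j : ι) : e j * (∑ i, c i • e i) = c j • e j := by
  classical
  simp [Finset.mul_sum, he.mul_eq]

theorem mul_eq_zero_of_sum_smul_mul_eq_smul {x : R} {θ : K} (hx : (∑ i, c i • e i) * x = θ • x)
    {j : ι} (hj : c j ≠ θ) : e j * x = 0 := by
  have h : c j • (e j * x) = θ • (e j * x) := by
    rw [← smul_mul_assoc, ← he.mul_sum_smul_s9, mul_assoc, hx, mul_smul_comm]
  rw [← sub_eq_zero, ← sub_smul, smul_eq_zero, sub_eq_zero] at h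
  exact h.resolve_left hj

theorem mul_eq_zero_of_mul_sum_smul_eq_smul {x : R} {θ : K} (hx : x * (∑ i, c i • e i) = θ • x)
    {j : ι} (hj : c j ≠ θ) : x * e j = 0 := by
  have h : c j • (x * e j) = θ • (x * e j) := by
    rw [← mul_smul_comm, ← he.sum_smul_mul_s9, ← mul_assoc, hx, smul_mul_assoc]
  rw [← sub_eq_zero, ← sub_smul, smul_eq_zero, sub_eq_zero] at h
  exact h.resolve_left hj

end OrthogonalIdempotents

theorem CompleteOrthogonalIdempotents.eq_zero_or_exists_eq_mul_mul {K R ι : Type*} [Field K]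
    [Ring R] [Algebra K R] [Fintype ι] {e : ι → R} (he : CompleteOrthogonalIdempotents e)
    {c : ι → K} (hc : Function.Injective c) {x : R} {θ : K}
    (hl : (∑ i, c i • e i) * x = θ • x) (hr : x * (∑ i, c i • e i) = θ • x) :
    x = 0 ∨ ∃ i, x = e i * x * e i := by
  by_cases hθ : ∃ i, c i = θ
  · obtain ⟨i, rfl⟩ := hθ
    have hl' : e i * x = x := by
      conv_rhs => rw [← one_mul x, ← he.complete, Finset.sum_mul]
      exact (Finset.sum_eq_single i (fun j _ hj ↦
        he.mul_eq_zero_of_sum_smul_mul_eq_smul c hl (hc.ne hj)) (by simp)).symm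
    have hr' : x * e i = x := by
      conv_rhs => rw [← mul_one x, ← he.complete, Finset.mul_sum]
      exact (Finset.sum_eq_single i (fun j _ hj ↦
        he.mul_eq_zero_of_mul_sum_smul_eq_smul c hr (hc.ne hj)) (by simp)).symm
    exact Or.inr ⟨i, by rw [hl', hr']⟩
  · simp only [not_exists] at hθ
    left
    rw [← one_mul x, ← he.complete, Finset.sum_mul]
    exact Finset.sum_eq_zero fun j _ ↦ he.mul_eq_zero_of_sum_smul_mul_eq_smul c hl (hθ j)

namespace Matrix

theorem hadamard_fromBlocks {l m n o α : Type*} [Mul α] (A : Matrix n l α) (B : Matrix n m α)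
    (C : Matrix o l α) (D : Matrix o m α) (A' : Matrix n l α) (B' : Matrix n m α)
    (C' : Matrix o l α) (D' : Matrix o m α) :
    fromBlocks A B C D ⊙ fromBlocks A' B' C' D' =
      fromBlocks (A ⊙ A') (B ⊙ B') (C ⊙ C') (D ⊙ D') := by
  ext (i | i) (j | j) <;> rfl

theorem PosSemidef.of_isHermitian_of_isIdempotentElem {n R : Type*} [Fintype n] [Ring R]
    [PartialOrder R] [StarRing R] [StarOrderedRing R] {F : Matrix n n R} (hH : F.IsHermitian)
    (hF : IsIdempotentElem F) : F.PosSemidef := by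
  simpa only [hH.eq, hF.eq] using posSemidef_self_mul_conjTranspose F

theorem PosSemidef.mulVec_eq_zero_of_sum_mulVec_eq_zero {n ι 𝕜 : Type*} [Fintype n] [Fintype ι]
    [RCLike 𝕜] {M : ι → Matrix n n 𝕜} (hM : ∀ i, (M i).PosSemidef) {x : n → 𝕜}
    (hx : (∑ i, M i) *ᵥ x = 0) (i : ι) : M i *ᵥ x = 0 := by
  rw [← (hM i).dotProduct_mulVec_zero_iff]
  have hsum : ∑ j, star x ⬝ᵥ M j *ᵥ x = 0 := by
    rw [← dotProduct_sum, ← sum_mulVec, hx, dotProduct_zero]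
  exact (Finset.sum_eq_zero_iff_of_nonneg fun j _ ↦ (hM j).dotProduct_mulVec_nonneg x).1 hsum i
    (Finset.mem_univ i)

variable {m n K : Type*} [Fintype n] [Field K]

theorem rank_pos_of_ne_zero {M : Matrix m n K} (hM : M ≠ 0) : 0 < M.rank := by
  classical
  rw [Nat.pos_iff_ne_zero, Matrix.rank, Ne, Submodule.finrank_eq_zero, LinearMap.range_eq_bot]
  contrapose! hM
  ext i j
  simpa using congrFun (LinearMap.congr_fun hM (Pi.single j 1)) i

theorem exists_eq_vecMulVec_of_rank_eq_one {M : Matrix m n K} (hM : M.rank = 1) :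
    ∃ (u : m → K) (v : n → K), M = vecMulVec u v := by
  classical
  obtain ⟨u, -, hu⟩ := finrank_eq_one_iff'.mp hM
  choose c hc using hu
  refine ⟨u, fun j ↦ c ⟨M *ᵥ Pi.single j 1, LinearMap.mem_range_self M.mulVecLin _⟩, ?_⟩
  ext i j
  have := congrFun (congrArg Subtype.val
    (hc ⟨_, LinearMap.mem_range_self M.mulVecLin (Pi.single j 1)⟩)) i
  simp only [SetLike.val_smul, Pi.smul_apply, smul_eq_mul, mulVecLin_apply] at this
  simpa [vecMulVec_apply, mul_comm] using this.symm

theorem exists_mul_mul_eq_smul_of_rank_eq_one {F : Matrix n n K} (hF : F.rank = 1)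
    (X : Matrix n n K) : ∃ c : K, F * X * F = c • F := by
  obtain ⟨u, v, rfl⟩ := exists_eq_vecMulVec_of_rank_eq_one hF
  exact ⟨v ᵥ* X ⬝ᵥ u, by rw [vecMulVec_mul, vecMulVec_mul_vecMulVec, vecMulVec_smul]⟩

theorem rank_le_two_mul_rank_of_forall_mulVec_sumElim_eq_zero
    {M : Matrix (n ⊕ n) (n ⊕ n) K} {N : Matrix n n K}
    (h : ∀ x y, N *ᵥ x = 0 → N *ᵥ y = 0 → M *ᵥ Sum.elim x y = 0) : M.rank ≤ 2 * N.rank := by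
  let L : (LinearMap.ker N.mulVecLin × LinearMap.ker N.mulVecLin) →ₗ[K]
      LinearMap.ker M.mulVecLin :=
    LinearMap.codRestrict _ ((LinearEquiv.sumArrowLequivProdArrow n n K K).symm.toLinearMap ∘ₗ
      ((LinearMap.ker N.mulVecLin).subtype.prodMap (LinearMap.ker N.mulVecLin).subtype))
      fun p ↦ h _ _ p.1.2 p.2.2
  have hL : Function.Injective L := by
    intro p q hpq
    have hpq' := congrArg Subtype.val hpq
    ext v
    · exact congrFun hpq' (Sum.inl v)
    · exact congrFun hpq' (Sum.inr v)
  have hker := LinearMap.finrank_le_finrank_of_injective hL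
  have hM := M.mulVecLin.finrank_range_add_finrank_ker
  have hN := N.mulVecLin.finrank_range_add_finrank_ker
  rw [finrank_prod] at hker
  rw [finrank_fintype_fun_eq_card, Fintype.card_sum] at hM
  rw [finrank_fintype_fun_eq_card] at hN
  unfold rank
  omega

variable [DecidableEq n]

theorem trace_eq_rank_of_isIdempotentElem {F : Matrix n n K} (hF : IsIdempotentElem F) :
    F.trace = F.rank := by
  have h : IsIdempotentElem (toLin' F) := hF.map (toLinAlgEquiv' (R := K) (n := n))
  have := (LinearMap.IsIdempotentElem.isProj_range _ h).trace
  rwa [LinearMap.trace_eq_matrix_trace K (Pi.basisFun K n), LinearMap.toMatrix_eq_toMatrix',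
    LinearMap.toMatrix'_toLin'] at this

theorem eq_fromBlocks_of_fromBlocks_mul_eq_smul {A : Matrix n n K}
    {E : Matrix (n ⊕ n) (n ⊕ n) K} {μ : K} (hl : fromBlocks A 1 1 0 * E = μ • E)
    (hr : E * fromBlocks A 1 1 0 = μ • E) :
    E = fromBlocks (μ ^ 2 • E.toBlocks₂₂) (μ • E.toBlocks₂₂) (μ • E.toBlocks₂₂) E.toBlocks₂₂ ∧
      ∃ θ : K, A * E.toBlocks₂₂ = θ • E.toBlocks₂₂ ∧ E.toBlocks₂₂ * A = θ • E.toBlocks₂₂ := by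
  obtain ⟨P, Q, S, R, rfl⟩ : ∃ P Q S R, E = fromBlocks P Q S R :=
    ⟨_, _, _, _, (fromBlocks_toBlocks E).symm⟩
  rw [fromBlocks_multiply, fromBlocks_smul, fromBlocks_inj] at hl hr
  simp only [Matrix.one_mul, Matrix.zero_mul, Matrix.mul_one, Matrix.mul_zero, add_zero] at hl hr
  obtain ⟨-, hAR, -, hQ⟩ := hl
  obtain ⟨-, hP, hRA, hS⟩ := hr
  rw [toBlocks_fromBlocks₂₂]
  subst hQ hS
  refine ⟨by rw [hP, smul_smul, ← sq], ?_⟩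
  rw [Matrix.mul_smul] at hAR
  rw [Matrix.smul_mul] at hRA
  by_cases hμ : μ = 0
  · have hR : R = 0 := by simpa [hμ] using hAR
    exact ⟨0, by simp [hR]⟩
  -- `μ (A R) + R = μ² R` gives `θ μ = μ² - 1`.
  · refine ⟨μ - μ⁻¹, ?_, ?_⟩ <;> apply smul_right_injective _ hμ <;> dsimp only
    · rw [eq_sub_of_add_eq hAR, smul_smul, smul_smul, mul_sub, mul_inv_cancel₀ hμ, sub_smul,
        one_smul]
    · rw [eq_sub_of_add_eq hRA, smul_smul, smul_smul, mul_sub, mul_inv_cancel₀ hμ, sub_smul,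
        one_smul]

end Matrix

namespace CompleteOrthogonalIdempotents

variable {n K ι : Type*} [Fintype n] [DecidableEq n] [Field K] [Fintype ι] {F : ι → Matrix n n K}

theorem rank_eq_one [CharZero K] (hF : CompleteOrthogonalIdempotents F)
    (hcard : Fintype.card ι = Fintype.card n) (hne : ∀ i, F i ≠ 0) (i : ι) : (F i).rank = 1 := by
  have hsum : ∑ j, (F j).rank = ∑ _j : ι, 1 := by
    rw [Finset.sum_const, Finset.card_univ, hcard, smul_eq_mul, mul_one, ← Nat.cast_inj (R := K),
      Nat.cast_sum, ← Matrix.trace_one, ← hF.complete, Matrix.trace_sum]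
    exact Finset.sum_congr rfl fun j _ ↦ (trace_eq_rank_of_isIdempotentElem (hF.idem j)).symm
  exact ((Finset.sum_eq_sum_iff_of_le fun j _ ↦ rank_pos_of_ne_zero (hne j)).1 hsum.symm i
    (Finset.mem_univ i)).symm

theorem eq_zero_or_exists_eq_smul_of_rank_eq_one (hF : CompleteOrthogonalIdempotents F)
    (hrank : ∀ i, (F i).rank = 1) {c : ι → K} (hc : Function.Injective c) {R : Matrix n n K}
    {θ : K} (hl : (∑ i, c i • F i) * R = θ • R) (hr : R * (∑ i, c i • F i) = θ • R) :
    R = 0 ∨ ∃ i, ∃ a : K, R = a • F i := by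
  refine (hF.eq_zero_or_exists_eq_mul_mul hc hl hr).imp_right fun ⟨i, hi⟩ ↦ ?_
  obtain ⟨a, ha⟩ := exists_mul_mul_eq_smul_of_rank_eq_one (hrank i) R
  exact ⟨i, a, hi.trans ha⟩

end CompleteOrthogonalIdempotents

theorem rank_avgMixing_rootedProduct_le_general {V : Type*} [Fintype V] [DecidableEq V]
    (A : Matrix V V ℝ)
    (lam : V → ℝ) (hlam : Function.Injective lam)
    (F : V → Matrix V V ℝ)
    (hFsymm : ∀ i, (F i).IsSymm)
    (hForth : ∀ i j, F i * F j = if i = j then F i else 0)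
    (hFne : ∀ i, F i ≠ 0)
    (hFsum : ∑ i, F i = 1)
    (hAdecomp : A = ∑ i, lam i • F i)
    (B : Matrix (V ⊕ V) (V ⊕ V) ℝ) (hB : B = Matrix.fromBlocks A 1 1 0)
    (m : ℕ) (μ : Fin m → ℝ)
    (E : Fin m → Matrix (V ⊕ V) (V ⊕ V) ℝ)
    (hEorth : ∀ r s, E r * E s = if r = s then E r else 0)
    (hBdecomp : B = ∑ r, μ r • E r) :
    (∑ r, E r ⊙ E r).rank ≤ 2 * (∑ i, F i ⊙ F i).rank := by
  have hF : CompleteOrthogonalIdempotents F := ⟨OrthogonalIdempotents.iff_mul_eq.2 hForth, hFsum⟩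
  have hE : OrthogonalIdempotents E := OrthogonalIdempotents.iff_mul_eq.2 hEorth
  have hrank : ∀ i, (F i).rank = 1 := hF.rank_eq_one rfl hFne
  have hpsd : ∀ i, (F i ⊙ F i).PosSemidef := fun i ↦
    have h := PosSemidef.of_isHermitian_of_isIdempotentElem (isHermitian_iff_isSymm.2 (hFsymm i))
      (hF.idem i)
    h.hadamard h
  refine rank_le_two_mul_rank_of_forall_mulVec_sumElim_eq_zero fun x y hx hy ↦ ?_
  rw [sum_mulVec]
  refine Finset.sum_eq_zero fun r _ ↦ ?_
  obtain ⟨hEr, θ, hl, hr⟩ := eq_fromBlocks_of_fromBlocks_mul_eq_smul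
    (hB ▸ hBdecomp ▸ hE.sum_smul_mul_s9 μ r) (hB ▸ hBdecomp ▸ hE.mul_sum_smul_s9 μ r)
  set R := (E r).toBlocks₂₂
  have hR : ∀ z, (∑ i, F i ⊙ F i) *ᵥ z = 0 → (R ⊙ R) *ᵥ z = 0 := by
    intro z hz
    rcases hF.eq_zero_or_exists_eq_smul_of_rank_eq_one hrank hlam (hAdecomp ▸ hl) (hAdecomp ▸ hr)
      with h0 | ⟨i, a, hi⟩
    · simp [h0]
    · rw [hi, smul_hadamard, hadamard_smul, smul_mulVec, smul_mulVec,
        PosSemidef.mulVec_eq_zero_of_sum_mulVec_eq_zero hpsd hz i, smul_zero, smul_zero]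
  rw [hEr, hadamard_fromBlocks, fromBlocks_mulVec]
  simp [smul_hadamard, hadamard_smul, smul_mulVec, hR x hx, hR y hy]

/-- If `A` (adjacency matrix of a graph on `n` vertices) has `n` distinct
eigenvalues and `B = [[A, I], [I, 0]]` is the adjacency matrix of the rooted product
`X(K₂)`, then `rank M̂(B) ≤ 2 · rank M̂(A)`. -/
theorem rank_avgMixing_rootedProduct_le {V : Type*} [Fintype V] [DecidableEq V]
    (G : SimpleGraph V) [DecidableRel G.Adj]
    (A : Matrix V V ℝ) (hA : A = G.adjMatrix ℝ)
    (lam : V → ℝ) (hlam : Function.Injective lam)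
    (F : V → Matrix V V ℝ)
    (hFsymm : ∀ i, (F i).IsSymm)
    (hForth : ∀ i j, F i * F j = if i = j then F i else 0)
    (hFne : ∀ i, F i ≠ 0)
    (hFsum : ∑ i, F i = 1)
    (hAdecomp : A = ∑ i, lam i • F i)
    (B : Matrix (V ⊕ V) (V ⊕ V) ℝ) (hB : B = Matrix.fromBlocks A 1 1 0)
    (m : ℕ) (μ : Fin m → ℝ) (hμ : Function.Injective μ)
    (E : Fin m → Matrix (V ⊕ V) (V ⊕ V) ℝ)
    (hEsymm : ∀ r, (E r).IsSymm)
    (hEorth : ∀ r s, E r * E s = if r = s then E r else 0)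
    (hEsum : ∑ r, E r = 1)
    (hBdecomp : B = ∑ r, μ r • E r) :
    (∑ r, E r ⊙ E r).rank ≤ 2 * (∑ i, F i ⊙ F i).rank :=
  rank_avgMixing_rootedProduct_le_general A lam hlam F hFsymm hForth hFne hFsum hAdecomp B hB m μ E
    hEorth hBdecomp
end

section
/- If X is a bipartite finite simple graph on n vertices whose adjacency matrix has n distinct eigenvalues, then rank(M̂(X)) ≤ ⌈n/2⌉. -/
/-!
A proper 2-colouring gives a diagonal `±1` matrix `D` with `D A D = -A`. Conjugating the spectral
resolution of `A` by `D` gives one of `-A`, so by uniqueness `D E_r D = E_s` with `θ_s = -θ_r`, and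
since `D` has entries `±1`, `E_s ∘ E_s = E_r ∘ E_r`. With `n` distinct eigenvalues every `E_r` has
rank one, hence so does `E_r ∘ E_r`, and `M̂` is a sum of rank-one matrices indexed by the
eigenvalues `θ_r ≥ 0`. The spectrum is symmetric and contains `0` at most once, so there are at
most `⌈n/2⌉` of those.
-/

open Matrix Finset

namespace Matrix

variable {m n K : Type*} [Fintype n] [Field K]

theorem rank_add_le (A B : Matrix m n K) : (A + B).rank ≤ A.rank + B.rank := by
  rw [rank, rank, rank, mulVecLin_add]
  exact (Submodule.finrank_mono (LinearMap.range_add_le _ _)).trans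
    (Submodule.finrank_add_le_finrank_add_finrank _ _)

theorem rank_sum_le {ι : Type*} (s : Finset ι) (f : ι → Matrix m n K) :
    (∑ i ∈ s, f i).rank ≤ ∑ i ∈ s, (f i).rank :=
  Finset.le_sum_of_subadditive (fun A : Matrix m n K => A.rank) rank_zero.le rank_add_le s f

theorem exists_eq_vecMulVec_of_rank_le_one {A : Matrix m n K} (h : A.rank ≤ 1) :
    ∃ u v, A = vecMulVec u v := by
  classical
  obtain ⟨u, hu⟩ := finrank_le_one_iff.mp h
  choose v hv using fun j : n => hu ⟨A *ᵥ Pi.single j 1, Pi.single j 1, rfl⟩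
  refine ⟨u.1, v, ext fun i j => ?_⟩
  have := congrFun (congrArg Subtype.val (hv j)) i
  simp only [SetLike.val_smul, Pi.smul_apply, smul_eq_mul, mulVec_single_one] at this
  rw [vecMulVec_apply, mul_comm, this, col_apply]

theorem rank_hadamard_le_one {A B : Matrix m n K} (hA : A.rank ≤ 1) (hB : B.rank ≤ 1) :
    (A ⊙ B).rank ≤ 1 := by
  obtain ⟨u, v, rfl⟩ := exists_eq_vecMulVec_of_rank_le_one hA
  obtain ⟨u', v', rfl⟩ := exists_eq_vecMulVec_of_rank_le_one hB
  have : vecMulVec u v ⊙ vecMulVec u' v' = vecMulVec (u * u') (v * v') := by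
    ext i j
    simp only [hadamard_apply, vecMulVec_apply, Pi.mul_apply]
    ring
  exact this ▸ rank_vecMulVec_le _ _

theorem rank_pos_of_ne_zero_s11 [DecidableEq n] {A : Matrix m n K} (h : A ≠ 0) : 0 < A.rank := by
  refine Nat.pos_of_ne_zero fun h0 => h ?_
  rw [rank, Submodule.finrank_eq_zero, LinearMap.range_eq_bot, ← toLin'_apply'] at h0
  exact toLin'.map_eq_zero_iff.mp h0

theorem trace_eq_rank_of_isIdempotentElem_s11 [DecidableEq n] {A : Matrix n n K}
    (h : IsIdempotentElem A) : A.trace = A.rank := by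
  have : IsIdempotentElem (toLin' A) := h.map toLinAlgEquiv'
  rw [← trace_toLin'_eq, ((LinearMap.isProj_range_iff_isIdempotentElem _).mpr this).trace]
  rfl

theorem rank_nsmul_le [DecidableEq n] (k : ℕ) (A : Matrix n n K) : (k • A).rank ≤ A.rank := by
  rw [nsmul_eq_mul]
  exact rank_mul_le_right _ _

theorem rank_sum_le_card_of_forall_exists_eq [DecidableEq n] {ι : Type*} [Fintype ι]
    [DecidableEq ι]
    {T : ι → Matrix n n K} (hT : ∀ r, (T r).rank ≤ 1) {t : Finset ι}
    (ht : ∀ r, ∃ s ∈ t, T s = T r) : (∑ r, T r).rank ≤ #t := by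
  choose ρ hρt hρ using ht
  calc (∑ r, T r).rank = (∑ k ∈ univ.image ρ, #{r | ρ r = k} • T k).rank := by
        rw [← Finset.sum_comp]; simp only [hρ]
    _ ≤ ∑ k ∈ univ.image ρ, (#{r | ρ r = k} • T k).rank := rank_sum_le _ _
    _ ≤ ∑ _k ∈ univ.image ρ, 1 := sum_le_sum fun k _ => (rank_nsmul_le _ _).trans (hT k)
    _ ≤ #t := by
        rw [sum_const, smul_eq_mul, mul_one]
        exact card_le_card (image_subset_iff.mpr fun r _ => hρt r)

theorem diagonal_mul_mul_diagonal_hadamard {α : Type*} [Fintype m] [DecidableEq m]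
    [DecidableEq n] [CommSemiring α] (d d' : m → α) (e e' : n → α) (A B : Matrix m n α) :
    (diagonal d * A * diagonal e) ⊙ (diagonal d' * B * diagonal e') =
      diagonal (fun i => d i * d' i) * (A ⊙ B) * diagonal (fun j => e j * e' j) := by
  ext i j
  simp only [hadamard_apply, mul_diagonal, diagonal_mul]
  ring

section SpectralResolution

variable {ι : Type*} [DecidableEq n] [Fintype ι] [DecidableEq ι]

structure IsSpectralResolution (A : Matrix n n K) (θ : ι → K) (E : ι → Matrix n n K) : Prop where
  mul_eq : ∀ r s, E r * E s = if r = s then E r else 0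
  sum_eq_one : ∑ r, E r = 1
  eq_sum_smul : A = ∑ r, θ r • E r

namespace IsSpectralResolution

variable {A : Matrix n n K} {θ : ι → K} {E : ι → Matrix n n K}
  {κ : Type*} [Fintype κ] [DecidableEq κ] {μ : κ → K} {F : κ → Matrix n n K}

theorem mul_proj (hE : IsSpectralResolution A θ E) (r : ι) : A * E r = θ r • E r := by
  rw [hE.eq_sum_smul, sum_mul, sum_eq_single r (fun s _ hs => by simp [hE.mul_eq, hs]) (by simp),
    smul_mul_assoc, hE.mul_eq, if_pos rfl]

theorem proj_mul (hE : IsSpectralResolution A θ E) (r : ι) : E r * A = θ r • E r := by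
  rw [hE.eq_sum_smul, mul_sum, sum_eq_single r (fun s _ hs => by simp [hE.mul_eq, hs.symm])
    (by simp), mul_smul_comm, hE.mul_eq, if_pos rfl]

theorem neg (hE : IsSpectralResolution A θ E) : IsSpectralResolution (-A) (-θ) E :=
  ⟨hE.mul_eq, hE.sum_eq_one, by simp [hE.eq_sum_smul, neg_smul]⟩

theorem conj (hE : IsSpectralResolution A θ E) {P Q : Matrix n n K} (hPQ : P * Q = 1) :
    IsSpectralResolution (P * A * Q) θ (fun r => P * E r * Q) := by
  have hQP : Q * P = 1 := mul_eq_one_comm.mp hPQ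
  refine ⟨fun r s => ?_, ?_, ?_⟩
  · calc P * E r * Q * (P * E s * Q) = P * (E r * E s) * Q := by
          simp only [mul_assoc, ← mul_assoc Q, hQP, one_mul]
      _ = _ := by split_ifs <;> simp [hE.mul_eq, *]
  · rw [← sum_mul, ← mul_sum, hE.sum_eq_one, mul_one, hPQ]
  · simp [hE.eq_sum_smul, mul_sum, sum_mul]

theorem mul_eq_zero_of_ne (hE : IsSpectralResolution A θ E)
    (hF : IsSpectralResolution A μ F) {r : ι} {s : κ} (h : θ r ≠ μ s) : E r * F s = 0 := by
  by_contra hne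
  refine h (smul_left_injective K hne ?_)
  calc θ r • (E r * F s) = E r * A * F s := by rw [hE.proj_mul, smul_mul_assoc]
    _ = μ s • (E r * F s) := by rw [mul_assoc, hF.mul_proj, mul_smul_comm]

theorem exists_eq_of_ne_zero (hE : IsSpectralResolution A θ E) (hF : IsSpectralResolution A μ F)
    (hθ : Function.Injective θ) (hμ : Function.Injective μ) {s : κ} (hs : F s ≠ 0) :
    ∃ r, θ r = μ s ∧ E r = F s := by
  have hzero {r t} (h : θ r ≠ μ t) : E r * F t = 0 := hE.mul_eq_zero_of_ne hF h
  have hF_eq : F s = ∑ r, E r * F s := by rw [← sum_mul, hE.sum_eq_one, one_mul]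
  obtain ⟨r, hr⟩ : ∃ r, θ r = μ s := by
    by_contra! h
    exact hs (hF_eq.trans (sum_eq_zero fun r _ => hzero (h r)))
  refine ⟨r, hr, ?_⟩
  calc E r = ∑ t, E r * F t := by rw [← mul_sum, hF.sum_eq_one, mul_one]
    _ = E r * F s :=
      sum_eq_single s (fun t _ ht => hzero (hr.trans_ne (hμ.ne ht.symm))) (by simp)
    _ = ∑ r', E r' * F s :=
      (sum_eq_single r (fun r' _ hr' => hzero ((hθ.ne hr').trans_eq hr)) (by simp)).symm
    _ = F s := hF_eq.symm

theorem rank_eq_one [CharZero K] (hE : IsSpectralResolution A θ E) (hne : ∀ r, E r ≠ 0)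
    (hcard : Fintype.card ι = Fintype.card n) (r : ι) : (E r).rank = 1 := by
  have htrace : ((∑ r, (E r).rank : ℕ) : K) = Fintype.card n := by
    calc ((∑ r, (E r).rank : ℕ) : K) = ∑ r, (E r).trace := by
          push_cast
          exact sum_congr rfl fun r _ =>
            (trace_eq_rank_of_isIdempotentElem_s11 (by simp [IsIdempotentElem, hE.mul_eq])).symm
      _ = Fintype.card n := by rw [← trace_sum, hE.sum_eq_one, trace_one]
  have hsum : ∑ r, (E r).rank = ∑ _r : ι, 1 := by
    rw [sum_const, card_univ, hcard, smul_eq_mul, mul_one]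
    exact_mod_cast htrace
  exact ((sum_eq_sum_iff_of_le fun r _ => rank_pos_of_ne_zero_s11 (hne r)).mp hsum.symm r
    (mem_univ r)).symm

end IsSpectralResolution

end SpectralResolution

end Matrix

theorem card_filter_nonneg_le_half {ι α : Type*} [Fintype ι] [AddCommGroup α] [LinearOrder α]
    [IsOrderedAddMonoid α] {θ : ι → α} (hθ : Function.Injective θ)
    (hneg : ∀ r, ∃ s, θ s = -θ r) : #{r | 0 ≤ θ r} ≤ (Fintype.card ι + 1) / 2 := by
  classical
  choose σ hσ using hneg
  have hσ_inj : Function.Injective σ := fun a b h => hθ (neg_injective (by rw [← hσ, ← hσ, h]))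
  have hpos : #{r | 0 < θ r} ≤ #{r | θ r < 0} :=
    card_le_card_of_injOn σ (fun r hr => by simp_all) hσ_inj.injOn
  have hzero : #{r | θ r = 0} ≤ 1 :=
    card_le_one.mpr fun a ha b hb => hθ (by simp_all)
  have hnonneg : #{r | 0 ≤ θ r} ≤ #{r | 0 < θ r} + #{r | θ r = 0} := by
    rw [← card_union_of_disjoint (disjoint_filter.mpr fun r _ h h' => h.ne' h'), ← filter_or]
    exact card_le_card fun r => by simp [le_iff_lt_or_eq, eq_comm]
  have htotal : #{r | θ r < 0} + #{r | 0 ≤ θ r} = Fintype.card ι := by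
    simpa [not_lt] using card_filter_add_card_filter_not (s := univ) (fun r => θ r < 0)
  omega

theorem SimpleGraph.Colorable.exists_diagonal_mul_adjMatrix_mul_diagonal {V R : Type*}
    [Fintype V] [DecidableEq V] [Ring R] {G : SimpleGraph V} [DecidableRel G.Adj]
    (h : G.Colorable 2) :
    ∃ d : V → R, (∀ v, d v * d v = 1) ∧
      diagonal d * G.adjMatrix R * diagonal d = -G.adjMatrix R := by
  obtain ⟨c⟩ := h
  refine ⟨fun v => (-1) ^ (c v : ℕ), fun v => ?_, ext fun u v => ?_⟩
  · simp [← pow_add, ← two_mul, pow_mul]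
  · rw [mul_diagonal, diagonal_mul, neg_apply, adjMatrix_apply]
    by_cases huv : G.Adj u v
    · have : (c u : ℕ) + c v = 1 := by have := c.valid huv; omega
      simp [huv, ← pow_add, this]
    · simp [huv]

theorem rank_avgMixing_bipartite_le_general {V : Type*} [Fintype V] [DecidableEq V]
    (G : SimpleGraph V) [DecidableRel G.Adj]
    (hbip : G.Colorable 2)
    (A : Matrix V V ℝ) (hA : A = G.adjMatrix ℝ)
    (θ : Fin (Fintype.card V) → ℝ) (hθ : Function.Injective θ)
    (E : Fin (Fintype.card V) → Matrix V V ℝ)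
    (horth : ∀ r s, E r * E s = if r = s then E r else 0)
    (hne : ∀ r, E r ≠ 0)
    (hsum : ∑ r, E r = 1)
    (hdecomp : A = ∑ r, θ r • E r) :
    (∑ r, E r ⊙ E r).rank ≤ (Fintype.card V + 1) / 2 := by
  have hE : A.IsSpectralResolution θ E := ⟨horth, hsum, hdecomp⟩
  obtain ⟨d, hd, hdA⟩ := hbip.exists_diagonal_mul_adjMatrix_mul_diagonal (R := ℝ)
  rw [← hA] at hdA
  have hD : diagonal d * diagonal d = 1 := by simp only [diagonal_mul_diagonal, hd, diagonal_one]
  have hF := (hE.conj hD).neg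
  rw [hdA, neg_neg] at hF
  have hpair (r) : ∃ s, θ s = -θ r ∧ E s ⊙ E s = E r ⊙ E r := by
    have hDu := IsUnit.of_mul_eq_one _ hD
    obtain ⟨s, hs, hEs⟩ := hE.exists_eq_of_ne_zero hF hθ (neg_injective.comp hθ)
      (s := r) ((hDu.mul_left_eq_zero.trans hDu.mul_right_eq_zero).not.mpr (hne r))
    refine ⟨s, hs, ?_⟩
    simp only [hEs, diagonal_mul_mul_diagonal_hadamard, hd, diagonal_one, one_mul, mul_one]
  have hrank (r) : (E r ⊙ E r).rank ≤ 1 :=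
    have h := (hE.rank_eq_one hne (Fintype.card_fin _) r).le
    rank_hadamard_le_one h h
  calc (∑ r, E r ⊙ E r).rank ≤ #{r | 0 ≤ θ r} := by
        refine rank_sum_le_card_of_forall_exists_eq hrank fun r => ?_
        by_cases hr : 0 ≤ θ r
        · exact ⟨r, by simpa using hr, rfl⟩
        · obtain ⟨s, hs, hEs⟩ := hpair r
          exact ⟨s, by simp only [mem_filter, mem_univ, true_and, hs]; linarith, hEs⟩
    _ ≤ (Fintype.card V + 1) / 2 := by
        simpa using card_filter_nonneg_le_half hθ fun r => (hpair r).imp fun _ => And.left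

/-- If `X` is a bipartite graph on `n` vertices with `n` distinct
eigenvalues, then `rank M̂(X) ≤ ⌈n/2⌉`. -/
theorem rank_avgMixing_bipartite_le {V : Type*} [Fintype V] [DecidableEq V]
    (G : SimpleGraph V) [DecidableRel G.Adj]
    (hbip : G.Colorable 2)
    (A : Matrix V V ℝ) (hA : A = G.adjMatrix ℝ)
    (θ : Fin (Fintype.card V) → ℝ) (hθ : Function.Injective θ)
    (E : Fin (Fintype.card V) → Matrix V V ℝ)
    (hsymm : ∀ r, (E r).IsSymm)
    (horth : ∀ r s, E r * E s = if r = s then E r else 0)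
    (hne : ∀ r, E r ≠ 0)
    (hsum : ∑ r, E r = 1)
    (hdecomp : A = ∑ r, θ r • E r) :
    (∑ r, E r ⊙ E r).rank ≤ (Fintype.card V + 1) / 2 :=
  rank_avgMixing_bipartite_le_general G hbip A hA θ hθ E horth hne hsum hdecomp
end

section
/- Let X be a finite simple graph on n vertices whose adjacency matrix A has n distinct eigenvalues θ_1,…,θ_n. Let C be the n × n coefficient matrix of X, let V be the n × n Vandermonde matrix with (i,j)-entry θ_j^{i−1}, and let Δ be the n × n diagonal matrix whose r-th diagonal entry is φ′(X, θ_r), the derivative of the characteristic polynomial of A evaluated at θ_r. Then M̂(X) = C V Δ^{−2} V^T C^T. -/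
/-! Orthogonality of the idempotents turns `∑_r (∏_{s ≠ r} (t - θ_s)) E_r` into a right inverse
of `tI - A` up to the factor `φ(X, t) = ∏_s (t - θ_s)`, so it is the adjugate of `tI - A`. The
diagonal entries of that adjugate are the polynomials `φ(X∖u, t)`, hence evaluating at `θ_r`
gives `(C V)_{ur} = φ(X∖u, θ_r) = φ'(X, θ_r) (E_r)_{uu}`, i.e. `C V = W Δ` with
`W_{ur} = (E_r)_{uu}`. The `n` idempotents have positive ranks summing to `trace I = n`, so each
has rank one, and being symmetric, `(E_r)_{uv}² = (E_r)_{uu} (E_r)_{vv}`. Therefore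
`M̂ = W Wᵀ = C V Δ⁻² Vᵀ Cᵀ`. -/

open scoped Matrix

/-- The coefficient matrix of a graph with adjacency matrix `A`: its `(u, r)` entry is the
coefficient of `t^r` (i.e. of `t^{(r+1)-1}`) in the characteristic polynomial of the matrix
obtained from `A` by deleting the row and column of the vertex `u`. -/
noncomputable def coeffMatrix {V : Type*} [Fintype V] [DecidableEq V]
    (A : Matrix V V ℝ) : Matrix V (Fin (Fintype.card V)) ℝ :=
  Matrix.of fun u r =>
    (Matrix.charpoly (A.submatrix (Subtype.val : {x : V // x ≠ u} → V)
      (Subtype.val : {x : V // x ≠ u} → V))).coeff (r : ℕ)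

open Polynomial Finset Lagrange

namespace Matrix

variable {K : Type*} [Field K] {n : Type*} [Fintype n] [DecidableEq n]

theorem trace_eq_rank_of_isIdempotentElem_s12 {E : Matrix n n K} (h : IsIdempotentElem E) :
    E.trace = E.rank := by
  have h' : IsIdempotentElem (toLin' E) := h.map toLinAlgEquiv'
  rw [← trace_toLin'_eq, (LinearMap.IsIdempotentElem.isProj_range _ h').trace]
  rfl

theorem mul_apply_eq_mul_apply_of_rank_le_one {m : Type*} {M : Matrix m n K} (h : M.rank ≤ 1)
    (i k : m) (j l : n) : M i j * M k l = M i l * M k j := by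
  obtain ⟨x, hx⟩ := finrank_le_one_iff.mp h
  have hcol : ∀ j, ∃ c : K, ∀ i, M i j = c * x.1 i := fun j => by
    obtain ⟨c, hc⟩ := hx ⟨M.mulVecLin (Pi.single j 1), LinearMap.mem_range_self _ _⟩
    exact ⟨c, fun i => by simpa using congrFun (congrArg Subtype.val hc).symm i⟩
  obtain ⟨cj, hj⟩ := hcol j
  obtain ⟨cl, hl⟩ := hcol l
  rw [hj, hj, hl, hl]
  ring

theorem isRoot_charpoly_of_mul_eq_smul {A E : Matrix n n K} {θ : K} (hE : E ≠ 0)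
    (h : A * E = θ • E) : A.charpoly.IsRoot θ := by
  rw [← mem_spectrum_iff_isRoot_charpoly, spectrum.mem_iff]
  intro hu
  refine hE (hu.mul_right_eq_zero.mp ?_)
  rw [sub_mul, Algebra.algebraMap_eq_smul_one, smul_mul, one_mul, h, sub_self]

section CommRing

variable {R : Type*} [CommRing R]

theorem charmatrix_submatrix {m : Type*} [Fintype m] [DecidableEq m] (B : Matrix n n R)
    {f : m → n} (hf : Function.Injective f) :
    charmatrix (B.submatrix f f) = (charmatrix B).submatrix f f := by
  ext i j
  by_cases h : i = j <;> simp [h, hf.ne_iff]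

theorem adjugate_apply_self (B : Matrix n n R) (u : n) :
    B.adjugate u u = (B.submatrix (Subtype.val : {x // x ≠ u} → n) Subtype.val).det := by
  rw [adjugate_apply, ← det_submatrix_equiv_self (Equiv.sumCompl (· ≠ u))]
  have h : (B.updateRow u (Pi.single u 1)).submatrix (Equiv.sumCompl (· ≠ u))
      (Equiv.sumCompl (· ≠ u)) =
      fromBlocks (B.submatrix Subtype.val Subtype.val)
        (B.submatrix Subtype.val Subtype.val) 0 1 := by
    ext (i | ⟨i, hi⟩) (j | ⟨j, hj⟩)
    · simp [updateRow_ne i.2]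
    · simp [updateRow_ne i.2]
    · obtain rfl := not_not.mp hi
      simp [j.2]
    · obtain rfl := not_not.mp hi
      obtain rfl := not_not.mp hj
      simp
  rw [h, det_fromBlocks_zero₂₁, det_one, mul_one]

theorem charpoly_submatrix_ne_eq_adjugate_charmatrix (B : Matrix n n R) (u : n) :
    (B.submatrix (Subtype.val : {x // x ≠ u} → n) Subtype.val).charpoly =
      (charmatrix B).adjugate u u := by
  rw [adjugate_apply_self, charpoly, charmatrix_submatrix B Subtype.val_injective]

theorem adjugate_eq_of_mul_eq_det_smul_one [IsDomain R] {B S : Matrix n n R} (hdet : B.det ≠ 0)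
    (h : B * S = B.det • 1) : B.adjugate = S := by
  refine smul_right_injective _ hdet ?_
  calc B.det • B.adjugate = B.adjugate * (B * S) := by rw [h, Matrix.mul_smul, mul_one]
    _ = B.det • S := by rw [← Matrix.mul_assoc, adjugate_mul, smul_mul, one_mul]

theorem mul_inv_sq_mul_self {M : Matrix n n R} (h : IsUnit M.det) : M * (M ^ 2)⁻¹ * M = 1 := by
  rw [sq, mul_inv_rev, ← Matrix.mul_assoc, mul_nonsing_inv _ h, Matrix.one_mul,
    nonsing_inv_mul _ h]

end CommRing

variable {ι : Type*} [Fintype ι] {A : Matrix n n K} {E : ι → Matrix n n K} {θ : ι → K}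

theorem mul_eq_smul_of_eq_sum_smul [DecidableEq ι]
    (horth : ∀ r s, E r * E s = if r = s then E r else 0) (hA : A = ∑ r, θ r • E r) (r : ι) :
    A * E r = θ r • E r := by
  rw [hA, sum_mul, sum_eq_single r (fun s _ hs => by rw [smul_mul, horth, if_neg hs, smul_zero])
    (by simp), smul_mul, horth, if_pos rfl]

theorem charpoly_eq_nodal (hθ : Function.Injective θ) (hcard : Fintype.card ι = Fintype.card n)
    (hroot : ∀ r, A.charpoly.IsRoot (θ r)) : A.charpoly = nodal univ θ := by
  refine eq_of_degree_le_of_eval_index_eq univ hθ.injOn ?_ ?_ ?_ fun r _ => ?_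
  · rw [charpoly_degree_eq_dim, card_univ, hcard]
  · rw [charpoly_degree_eq_dim, degree_nodal, card_univ, hcard]
  · rw [A.charpoly_monic.leadingCoeff, nodal_monic.leadingCoeff]
  · rw [hroot r, eval_nodal_at_node (mem_univ r)]

theorem rank_eq_one_of_sum_eq_one [CharZero K] (hidem : ∀ r, IsIdempotentElem (E r))
    (hne : ∀ r, E r ≠ 0) (hsum : ∑ r, E r = 1) (hcard : Fintype.card ι = Fintype.card n)
    (r : ι) : (E r).rank = 1 := by
  have hpos : ∀ r, 1 ≤ (E r).rank := fun r => Nat.one_le_iff_ne_zero.mpr fun h0 => hne r <| by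
    have h' : IsIdempotentElem (toLin' (E r)) := (hidem r).map toLinAlgEquiv'
    rw [← toLin'.map_eq_zero_iff, ← LinearMap.IsIdempotentElem.trace_eq_zero_iff h',
      trace_toLin'_eq, trace_eq_rank_of_isIdempotentElem_s12 (hidem r), h0, Nat.cast_zero]
  have htotal : ∑ r, ((E r).rank : K) = Fintype.card ι := by
    simp_rw [← trace_eq_rank_of_isIdempotentElem_s12 (hidem _), ← trace_sum, hsum, trace_one, hcard]
  by_contra h
  have hlt := Finset.sum_lt_sum (fun r _ => hpos r) ⟨r, mem_univ r, (hpos r).lt_of_ne' h⟩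
  simp only [sum_const, card_univ, smul_eq_mul, mul_one] at hlt
  exact hlt.ne' (by exact_mod_cast htotal)

variable [DecidableEq ι]

theorem charmatrix_mul_sum_nodal_erase_smul (hAE : ∀ r, A * E r = θ r • E r)
    (hsum : ∑ r, E r = 1) :
    charmatrix A * ∑ r, nodal (univ.erase r) θ • (E r).map C = nodal univ θ • 1 := by
  have hE : ∀ r, charmatrix A * (E r).map C = (X - C (θ r)) • (E r).map C := fun r => by
    rw [charmatrix, sub_mul, sub_smul, scalar_apply, ← smul_eq_diagonal_mul,
      RingHom.mapMatrix_apply, ← Matrix.map_mul, hAE r]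
    congr 1
    ext i j
    simp
  simp_rw [Finset.mul_sum, Matrix.mul_smul, hE, smul_smul, mul_comm _ (X - C _),
    ← nodal_eq_mul_nodal_erase (mem_univ _), ← smul_sum]
  congr
  change ∑ r, (C : K →+* K[X]).mapMatrix (E r) = 1
  rw [← map_sum, hsum, map_one]

theorem eval_adjugate_charmatrix (hAE : ∀ r, A * E r = θ r • E r)
    (hsum : ∑ r, E r = 1) (hchar : A.charpoly = nodal univ θ) (r : ι) (u v : n) :
    ((charmatrix A).adjugate u v).eval (θ r) = (derivative A.charpoly).eval (θ r) * E r u v := by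
  have hdet : (charmatrix A).det = nodal univ θ := hchar
  rw [adjugate_eq_of_mul_eq_det_smul_one (hdet ▸ nodal_ne_zero)
    (hdet ▸ charmatrix_mul_sum_nodal_erase_smul hAE hsum), sum_apply, eval_finsetSum,
    sum_eq_single r, hchar, eval_nodal_derivative_eval_node_eq (mem_univ r)]
  · simp
  · intro s _ hs
    simp [eval_nodal_at_node (mem_erase.mpr ⟨Ne.symm hs, mem_univ r⟩)]
  · simp

theorem eval_charpoly_submatrix_ne (hAE : ∀ r, A * E r = θ r • E r) (hsum : ∑ r, E r = 1)
    (hchar : A.charpoly = nodal univ θ) (r : ι) (u : n) :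
    (A.submatrix (Subtype.val : {x // x ≠ u} → n) Subtype.val).charpoly.eval (θ r) =
      (derivative A.charpoly).eval (θ r) * E r u u := by
  rw [charpoly_submatrix_ne_eq_adjugate_charmatrix, eval_adjugate_charmatrix hAE hsum hchar]

end Matrix

open Matrix

theorem coeffMatrix_mul_vandermonde_transpose {V : Type*} [Fintype V] [DecidableEq V]
    (A : Matrix V V ℝ) (θ : Fin (Fintype.card V) → ℝ) :
    coeffMatrix A * (vandermonde θ)ᵀ = of fun u r =>
      (A.submatrix (Subtype.val : {x // x ≠ u} → V) Subtype.val).charpoly.eval (θ r) := by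
  ext u r
  have hdeg : (A.submatrix (Subtype.val : {x // x ≠ u} → V) Subtype.val).charpoly.natDegree <
      Fintype.card V := by
    rw [charpoly_natDegree_eq_dim]
    exact Fintype.card_subtype_lt (x := u) (by simp)
  rw [mul_apply, of_apply, eval_eq_sum_range' hdeg, ← Fin.sum_univ_eq_sum_range]
  rfl

theorem avgMixing_eq_coeffMatrix_formula_general {V : Type*} [Fintype V] [DecidableEq V]
    (A : Matrix V V ℝ)
    (θ : Fin (Fintype.card V) → ℝ) (hθ : Function.Injective θ)
    (E : Fin (Fintype.card V) → Matrix V V ℝ)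
    (hsymm : ∀ r, (E r).IsSymm)
    (horth : ∀ r s, E r * E s = if r = s then E r else 0)
    (hne : ∀ r, E r ≠ 0)
    (hsum : ∑ r, E r = 1)
    (hdecomp : A = ∑ r, θ r • E r) :
    ∑ r, E r ⊙ E r =
      coeffMatrix A *
        (Matrix.of fun i j : Fin (Fintype.card V) => θ j ^ (i : ℕ)) *
        ((Matrix.diagonal fun r => Polynomial.eval (θ r) (Polynomial.derivative A.charpoly)) ^ 2)⁻¹ *
        (Matrix.of fun i j : Fin (Fintype.card V) => θ j ^ (i : ℕ))ᵀ *
        (coeffMatrix A)ᵀ := by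
  have hAE := mul_eq_smul_of_eq_sum_smul horth hdecomp
  have hchar := charpoly_eq_nodal hθ (Fintype.card_fin _) fun r =>
    isRoot_charpoly_of_mul_eq_smul (hne r) (hAE r)
  have hidem : ∀ r, IsIdempotentElem (E r) := fun r => (horth r r).trans (if_pos rfl)
  have hrank1 : ∀ r u v, E r u v * E r u v = E r u u * E r v v := fun r u v => by
    nth_rw 2 [← (hsymm r).apply u v]
    exact mul_apply_eq_mul_apply_of_rank_le_one
      (rank_eq_one_of_sum_eq_one hidem hne hsum (Fintype.card_fin _) r).le u v v u
  set D := diagonal fun r => (derivative A.charpoly).eval (θ r)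
  have hD : IsUnit D.det := by
    simpa [D, isUnit_iff_ne_zero, prod_ne_zero_iff, hchar, nodalWeight_eq_eval_derivative_nodal]
      using fun r => nodalWeight_ne_zero hθ.injOn (mem_univ r)
  set W : Matrix V (Fin (Fintype.card V)) ℝ := of fun u r => E r u u
  have hCV : coeffMatrix A * (Matrix.of fun i j : Fin (Fintype.card V) => θ j ^ (i : ℕ)) =
      W * D := by
    refine (coeffMatrix_mul_vandermonde_transpose A θ).trans ?_
    ext u r
    simp [W, D, eval_charpoly_submatrix_ne hAE hsum hchar, mul_comm]
  calc ∑ r, E r ⊙ E r = W * Wᵀ := by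
        ext u v
        simp [W, mul_apply, Matrix.sum_apply, hrank1]
    _ = W * (D * (D ^ 2)⁻¹ * D) * Wᵀ := by rw [mul_inv_sq_mul_self hD, Matrix.mul_one]
    _ = W * D * (D ^ 2)⁻¹ * (W * D)ᵀ := by
        rw [transpose_mul, show Dᵀ = D from diagonal_transpose _]
        simp only [Matrix.mul_assoc]
    _ = _ := by rw [Matrix.mul_assoc _ _ (coeffMatrix A)ᵀ, ← transpose_mul, hCV]

/-- For a graph `X` on `n` vertices with `n` distinct eigenvalues
`θ_1, …, θ_n`, coefficient matrix `C`, Vandermonde matrix `V` with `(i,j)` entry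
`θ_j^{i−1}`, and `Δ = diag(φ'(X, θ_r))`, one has `M̂(X) = C V Δ⁻² Vᵀ Cᵀ`. -/
theorem avgMixing_eq_coeffMatrix_formula {V : Type*} [Fintype V] [DecidableEq V]
    (G : SimpleGraph V) [DecidableRel G.Adj]
    (A : Matrix V V ℝ) (hA : A = G.adjMatrix ℝ)
    (θ : Fin (Fintype.card V) → ℝ) (hθ : Function.Injective θ)
    (E : Fin (Fintype.card V) → Matrix V V ℝ)
    (hsymm : ∀ r, (E r).IsSymm)
    (horth : ∀ r s, E r * E s = if r = s then E r else 0)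
    (hne : ∀ r, E r ≠ 0)
    (hsum : ∑ r, E r = 1)
    (hdecomp : A = ∑ r, θ r • E r) :
    ∑ r, E r ⊙ E r =
      coeffMatrix A *
        (Matrix.of fun i j : Fin (Fintype.card V) => θ j ^ (i : ℕ)) *
        ((Matrix.diagonal fun r => Polynomial.eval (θ r) (Polynomial.derivative A.charpoly)) ^ 2)⁻¹ *
        (Matrix.of fun i j : Fin (Fintype.card V) => θ j ^ (i : ℕ))ᵀ *
        (coeffMatrix A)ᵀ :=
  avgMixing_eq_coeffMatrix_formula_general A θ hθ E hsymm horth hne hsum hdecomp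
end

section
/- If M is a real symmetric n × n matrix of rank r, then there is a set S of r indices such that the principal submatrix of M with rows and columns indexed by S is invertible. -/
/-!
Pick rows `S` of `M` forming a basis of its row space, so `|S| = r` and `M = C * M[S, ·]` for
some `C`. Transposing and using `Mᵀ = M` gives `M[S, ·] = M[S, S] * Cᵀ`, hence
`r = rank M[S, ·] ≤ rank M[S, S] ≤ r`: the square matrix `M[S, S]` has full rank.
-/

open Matrix

namespace Matrix

variable {m n K : Type*} [Field K]

theorem isUnit_of_rank_eq_card [Fintype m] [DecidableEq m] {A : Matrix m m K}
    (h : A.rank = Fintype.card m) : IsUnit A := by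
  rw [← mulVec_surjective_iff_isUnit, ← coe_mulVecLin, ← LinearMap.range_eq_top]
  apply Submodule.eq_top_of_finrank_eq
  rw [← rank, h, Module.finrank_fintype_fun_eq_card]

theorem exists_finset_linearIndependent_rows_mul_eq [Finite m] (A : Matrix m n K) :
    ∃ S : Finset m, LinearIndependent K (A.submatrix ((↑) : S → m) id).row ∧
      ∃ C : Matrix m S K, C * A.submatrix ((↑) : S → m) id = A := by
  obtain ⟨b, -, -, hspan, hli⟩ :=
    exists_linearIndepOn_extension (v := A.row) (linearIndepOn_empty K _) (Set.empty_subset .univ)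
  obtain ⟨S, rfl⟩ := b.toFinite.exists_finset_coe
  have hrow (i : m) : A i ∈ Submodule.span K (Set.range (A.submatrix ((↑) : S → m) id).row) := by
    have := hspan (Set.mem_image_of_mem A.row (Set.mem_univ i))
    rwa [Set.image_eq_range] at this
  choose c hc using fun i => (Submodule.mem_span_range_iff_exists_fun K).mp (hrow i)
  refine ⟨S, hli, of c, ?_⟩
  ext i j
  rw [mul_apply, ← congrFun (hc i) j, Finset.sum_apply]
  rfl

theorem rank_eq_card_of_linearIndependent_rows_mul_eq [Fintype n] {S : Type*} [Fintype S]
    {A : Matrix m n K} {f : S → m} (hli : LinearIndependent K (A.submatrix f id).row)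
    {C : Matrix m S K} (hC : C * A.submatrix f id = A) : A.rank = Fintype.card S := by
  rw [← hli.rank_matrix]
  refine le_antisymm ?_ (rank_submatrix_le A f id)
  conv_lhs => rw [← hC]
  exact rank_mul_le_right C _

theorem IsSymm.submatrix_rows_eq_mul {S : Type*} [Fintype n] [Fintype S] {M : Matrix n n K}
    (hM : M.IsSymm) {f : S → n} {C : Matrix n S K} (hC : C * M.submatrix f id = M) :
    M.submatrix f id = M.submatrix f f * Cᵀ := by
  calc M.submatrix f id = (C * M.submatrix f id)ᵀ.submatrix f id := by rw [hC, hM.eq]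
    _ = (M.submatrix f id)ᵀ.submatrix f id * Cᵀ := by
      rw [transpose_mul, submatrix_mul _ _ f id id Function.bijective_id, submatrix_id_id]
    _ = M.submatrix f f * Cᵀ := by rw [transpose_submatrix, submatrix_submatrix, hM.eq]; rfl

end Matrix

/-- A real symmetric matrix of rank `r` has an invertible `r × r`
principal submatrix. -/
theorem exists_principal_submatrix_invertible {n : Type*} [Fintype n] [DecidableEq n]
    (M : Matrix n n ℝ) (hM : M.IsSymm) (r : ℕ) (hr : M.rank = r) :
    ∃ S : Finset n, S.card = r ∧
      IsUnit (M.submatrix (fun i : S => (i : n)) (fun i : S => (i : n))).det := by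
  obtain ⟨S, hli, C, hC⟩ := M.exists_finset_linearIndependent_rows_mul_eq
  refine ⟨S, ?_, ?_⟩
  · rw [← hr, rank_eq_card_of_linearIndependent_rows_mul_eq hli hC, Fintype.card_coe]
  rw [← isUnit_iff_isUnit_det]
  refine isUnit_of_rank_eq_card (le_antisymm (rank_le_card_width _) ?_)
  calc Fintype.card S = (M.submatrix ((↑) : S → n) id).rank := hli.rank_matrix.symm
    _ = (M.submatrix ((↑) : S → n) ((↑) : S → n) * Cᵀ).rank := by
      rw [hM.submatrix_rows_eq_mul hC]
    _ ≤ _ := rank_mul_le_left _ _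
end

section
/- If T is a finite tree whose adjacency matrix has |V(T)| distinct eigenvalues, then either T has a perfect matching, or there exists a vertex v such that the graph T∖v obtained by deleting v has a perfect matching. -/
/-!
Since `A * E r = θ r • E r` with `E r ≠ 0`, each of the `n` distinct numbers `θ r` is a root of
the degree-`n` characteristic polynomial of the adjacency matrix `A`, so this polynomial is
squarefree and `0` is at most a simple root: its constant or its linear coefficient is nonzero.
The former is `± det A`, the latter `±` the sum of the principal minors `det (A ∖ v)`, and
`A ∖ v` is the adjacency matrix of the forest `T ∖ v`. Finally, a term `∏ i, B (σ i) i ≠ 0` of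
the determinant of the adjacency matrix `B` of a forest gives a permutation `σ` moving every
vertex to a neighbour; its orbits cannot be cycles of length `≥ 3`, so `σ` is an involution
whose orbits are the edges of a perfect matching.
-/

open scoped Matrix
open Polynomial

namespace SimpleGraph

variable {V : Type*} {G : SimpleGraph V}

def Walk.iterate {f : V → V} (hf : ∀ v, G.Adj v (f v)) (a : V) : (m : ℕ) → G.Walk a (f^[m] a)
  | 0 => .nil
  | m + 1 => (iterate hf a m).concat (by rw [Function.iterate_succ_apply']; exact hf _)

theorem Walk.support_iterate {f : V → V} (hf : ∀ v, G.Adj v (f v)) (a : V) (m : ℕ) :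
    (iterate hf a m).support = (List.range (m + 1)).map (f^[·] a) := by
  induction m with
  | zero => rfl
  | succ m ih => rw [iterate, support_concat, ih, List.range_succ (n := m + 1)]; simp

theorem Walk.length_iterate {f : V → V} (hf : ∀ v, G.Adj v (f v)) (a : V) (m : ℕ) :
    (iterate hf a m).length = m := by
  induction m with
  | zero => rfl
  | succ m ih => rw [iterate, length_concat, ih]

theorem IsAcyclic.involutive_of_adj_apply [Finite V] (hG : G.IsAcyclic) {σ : Equiv.Perm V}
    (hσ : ∀ v, G.Adj v (σ v)) : Function.Involutive σ := by
  intro a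
  by_contra hne
  set k := Function.minimalPeriod σ a
  have hk : 0 < k :=
    Function.minimalPeriod_pos_of_mem_periodicPts (σ.injective.mem_periodicPts a)
  have hk1 : k ≠ 1 := fun h => (hσ a).ne' (Function.minimalPeriod_eq_one_iff_isFixedPt.mp h)
  have hk2 : k ≠ 2 := fun h =>
    hne (by simpa [k, h] using Function.iterate_minimalPeriod (f := σ) (x := a))
  -- The orbit `a, σ a, …, σ^[k-1] a` is a path, and the edge `σ^[k-1] a ~ a` closes it up.
  have hback : G.Adj a (σ^[k - 1] a) := by
    have := hσ (σ^[k - 1] a)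
    rwa [← Function.iterate_succ_apply' σ, Nat.succ_eq_add_one, Nat.sub_add_cancel hk,
      Function.iterate_minimalPeriod, adj_comm] at this
  have hpath : (Walk.iterate hσ a (k - 1)).IsPath := by
    rw [Walk.isPath_def, Walk.support_iterate]
    refine List.nodup_range.map_on fun i hi j hj h =>
      Function.iterate_injOn_Iio_minimalPeriod ?_ ?_ h
    · simp only [List.mem_range] at hi; simp only [Set.mem_Iio]; omega
    · simp only [List.mem_range] at hj; simp only [Set.mem_Iio]; omega
  have hlen := congrArg (fun p : G.Path _ _ => p.1.length)
    ((hG.subsingleton_path _ _).elim (Path.singleton hback) ⟨_, hpath⟩)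
  simp only [Path.singleton_coe, Walk.length_cons, Walk.length_nil, Walk.length_iterate] at hlen
  omega

theorem exists_isPerfectMatching_of_involutive {σ : V → V} (hσ : Function.Involutive σ)
    (hadj : ∀ v, G.Adj v (σ v)) : ∃ M : G.Subgraph, M.IsPerfectMatching := by
  refine ⟨{ verts := Set.univ
            Adj := fun a b => σ a = b
            adj_sub := by rintro a _ rfl; exact hadj a
            edge_vert := fun _ => trivial
            symm := ⟨by rintro a _ rfl; exact hσ a⟩ }, ?_⟩
  rw [Subgraph.isPerfectMatching_iff]
  exact fun v => ⟨σ v, rfl, fun _ h => Eq.symm h⟩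

theorem exists_perm_adj_apply_of_det_adjMatrix_ne_zero [Fintype V] [DecidableEq V]
    [DecidableRel G.Adj] {R : Type*} [CommRing R] (h : (G.adjMatrix R).det ≠ 0) :
    ∃ σ : Equiv.Perm V, ∀ v, G.Adj v (σ v) := by
  rw [Matrix.det_apply] at h
  obtain ⟨σ, -, hσ⟩ := Finset.exists_ne_zero_of_sum_ne_zero h
  refine ⟨σ, fun v => (G.adj_comm _ _).mp ?_⟩
  by_contra hnadj
  exact right_ne_zero_of_smul hσ (Finset.prod_eq_zero (Finset.mem_univ v) (by simp [hnadj]))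

theorem IsAcyclic.exists_isPerfectMatching_of_det_adjMatrix_ne_zero [Fintype V] [DecidableEq V]
    [DecidableRel G.Adj] {R : Type*} [CommRing R] (hG : G.IsAcyclic)
    (h : (G.adjMatrix R).det ≠ 0) : ∃ M : G.Subgraph, M.IsPerfectMatching := by
  obtain ⟨σ, hσ⟩ := exists_perm_adj_apply_of_det_adjMatrix_ne_zero h
  exact exists_isPerfectMatching_of_involutive (hG.involutive_of_adj_apply hσ) hσ

theorem adjMatrix_induce {R : Type*} [Zero R] [One R] (s : Set V) [DecidableRel G.Adj]
    [DecidableRel (G.induce s).Adj] :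
    (G.induce s).adjMatrix R = (G.adjMatrix R).submatrix (↑) (↑) := by
  ext i j
  simp only [adjMatrix_apply, Matrix.submatrix_apply, comap_adj, Function.Embedding.subtype_apply]

end SimpleGraph

namespace Matrix

variable {n : Type*} [Fintype n] [DecidableEq n]

theorem isRoot_charpoly_of_mul_eq_smul_s15 {K : Type*} [Field K] {M N : Matrix n n K} {θ : K}
    (hN : N ≠ 0) (h : M * N = θ • N) : M.charpoly.IsRoot θ := by
  rw [IsRoot, eval_charpoly]
  by_contra hdet
  have hunit : IsUnit (scalar n θ - M) :=
    (isUnit_iff_isUnit_det _).mpr (isUnit_iff_ne_zero.mpr hdet)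
  refine hN (hunit.mul_right_eq_zero.mp ?_)
  rw [sub_mul, h, scalar_apply, smul_eq_diagonal_mul, sub_self]

theorem exists_det_submatrix_ne_zero_of_charpoly_coeff_one_ne_zero {R : Type*} [CommRing R]
    {M : Matrix n n R} (h : M.charpoly.coeff 1 ≠ 0) :
    ∃ v, (M.submatrix (Subtype.val : ({u | u ≠ v} : Set n) → n) Subtype.val).det ≠ 0 := by
  have hcard : 1 ≤ Fintype.card n := by
    by_contra! h0
    have : IsEmpty n := Fintype.card_eq_zero_iff.mp (by omega)
    simp [coeff_one] at h
  have hsum := charpoly_coeff_eq_sum_minors M (Fintype.card n - 1) (by omega)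
  rw [Nat.sub_sub_self hcard] at hsum
  obtain ⟨s, hs, hdet⟩ := Finset.exists_ne_zero_of_sum_ne_zero (right_ne_zero_of_mul (hsum ▸ h))
  obtain ⟨v, hv⟩ : ∃ v, sᶜ = {v} := Finset.card_eq_one.mp <| by
    rw [Finset.card_compl, (Finset.mem_powersetCard.mp hs).2]; omega
  have hmem (u : n) : u ∈ s ↔ u ∈ ({u | u ≠ v} : Set n) := by
    rw [Set.mem_ofPred_eq, ← Finset.notMem_compl, hv, Finset.mem_singleton]
  refine ⟨v, ?_⟩
  rw [← det_submatrix_equiv_self (Equiv.subtypeEquivRight hmem)]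
  exact hdet

end Matrix

namespace Polynomial

theorem squarefree_of_monic_of_injective_isRoot {K ι : Type*} [Field K] [Fintype ι] {p : K[X]}
    (hp : p.Monic) (hdeg : p.natDegree = Fintype.card ι) {θ : ι → K} (hθ : Function.Injective θ)
    (hroot : ∀ i, p.IsRoot (θ i)) : Squarefree p := by
  have hdvd : ∏ i, (X - C (θ i)) ∣ p :=
    Finset.prod_dvd_of_coprime (fun i _ j _ hij => pairwise_coprime_X_sub_C hθ hij)
      fun i _ => dvd_iff_isRoot.mpr (hroot i)
  have hprod : ∏ i, (X - C (θ i)) = p :=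
    (eq_of_monic_of_dvd_of_natDegree_le (monic_prod_of_monic _ _ fun i _ => monic_X_sub_C (θ i))
      hp hdvd (by rw [hdeg, natDegree_finsetProd_X_sub_C_eq_card, Finset.card_univ])).symm
  rw [← hprod]
  exact (separable_prod_X_sub_C_iff'.mpr hθ.injOn).squarefree

theorem Squarefree.coeff_zero_ne_zero_or_coeff_one_ne_zero {R : Type*} [Semiring R]
    [Nontrivial R] {p : R[X]} (hp : Squarefree p) : p.coeff 0 ≠ 0 ∨ p.coeff 1 ≠ 0 := by
  by_contra! h
  have hX : X * X ∣ p := by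
    rw [← sq, X_pow_dvd_iff]
    intro d hd
    interval_cases d <;> simp [h]
  exact not_isUnit_X (hp X hX)

end Polynomial

theorem tree_perfectMatching_or_deleted_general {V : Type*} [Fintype V]
    (T : SimpleGraph V) [DecidableRel T.Adj] (hT : T.IsTree)
    (θ : Fin (Fintype.card V) → ℝ) (hθ : Function.Injective θ)
    (E : Fin (Fintype.card V) → Matrix V V ℝ)
    (horth : ∀ r s, E r * E s = if r = s then E r else 0)
    (hne : ∀ r, E r ≠ 0)
    (hdecomp : T.adjMatrix ℝ = ∑ r, θ r • E r) :
    (∃ M : T.Subgraph, M.IsPerfectMatching) ∨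
      ∃ v : V, ∃ M : (T.induce {u | u ≠ v}).Subgraph, M.IsPerfectMatching := by
  classical
  have heig (r) : T.adjMatrix ℝ * E r = θ r • E r := by simp [hdecomp, Finset.sum_mul, horth]
  have hsq : Squarefree (T.adjMatrix ℝ).charpoly :=
    Polynomial.squarefree_of_monic_of_injective_isRoot (Matrix.charpoly_monic _)
      (by rw [Matrix.charpoly_natDegree_eq_dim, Fintype.card_fin]) hθ
      fun r => Matrix.isRoot_charpoly_of_mul_eq_smul_s15 (hne r) (heig r)
  rcases hsq.coeff_zero_ne_zero_or_coeff_one_ne_zero with h0 | h1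
  · left
    refine hT.isAcyclic.exists_isPerfectMatching_of_det_adjMatrix_ne_zero (R := ℝ) ?_
    rw [Matrix.det_eq_sign_charpoly_coeff]
    exact mul_ne_zero (pow_ne_zero _ (neg_ne_zero.mpr one_ne_zero)) h0
  · right
    obtain ⟨v, hv⟩ := Matrix.exists_det_submatrix_ne_zero_of_charpoly_coeff_one_ne_zero h1
    refine ⟨v, (hT.isAcyclic.induce _).exists_isPerfectMatching_of_det_adjMatrix_ne_zero
      (R := ℝ) ?_⟩
    rwa [SimpleGraph.adjMatrix_induce]

/-- If `T` is a tree whose adjacency matrix has `|V(T)|` distinct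
eigenvalues, then either `T` has a perfect matching, or `T ∖ v` has a perfect matching for
some vertex `v`. -/
theorem tree_perfectMatching_or_deleted {V : Type*} [Fintype V] [DecidableEq V]
    (T : SimpleGraph V) [DecidableRel T.Adj] (hT : T.IsTree)
    (θ : Fin (Fintype.card V) → ℝ) (hθ : Function.Injective θ)
    (E : Fin (Fintype.card V) → Matrix V V ℝ)
    (hsymm : ∀ r, (E r).IsSymm)
    (horth : ∀ r s, E r * E s = if r = s then E r else 0)
    (hne : ∀ r, E r ≠ 0)
    (hsum : ∑ r, E r = 1)
    (hdecomp : T.adjMatrix ℝ = ∑ r, θ r • E r) :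
    (∃ M : T.Subgraph, M.IsPerfectMatching) ∨
      ∃ v : V, ∃ M : (T.induce {u | u ≠ v}).Subgraph, M.IsPerfectMatching :=
  tree_perfectMatching_or_deleted_general T hT θ hθ E horth hne hdecomp
end

section
/- If T is a finite tree on at least 4 vertices whose adjacency matrix has |V(T)| distinct eigenvalues, and T is not isomorphic to the path P_4 on four vertices, then rank(M̂(T)) ≥ 3. -/
open scoped Matrix

set_option linter.unusedSectionVars false
set_option maxHeartbeats 1000000

section aux
variable {V : Type*} [Fintype V] [DecidableEq V]

private lemma rowsq (F : Matrix V V ℝ) (hs : F.IsSymm) (hi : F * F = F) (u : V) :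
    ∑ v, (F u v)^2 = F u u := by
  have : ∀ v, F u v ^ 2 = F u v * F v u := fun v => by rw [hs.apply v u, sq]
  rw [Finset.sum_congr rfl fun v _ => this v, ← Matrix.mul_apply, hi]

private lemma trace_ge_one (F : Matrix V V ℝ) (hs : F.IsSymm) (hi : F * F = F)
    (hne : F ≠ 0) : 1 ≤ F.trace := by
  -- find nonzero column
  have h1 : ∃ i j, F i j ≠ 0 := by
    by_contra h
    push_neg at h
    exact hne (Matrix.ext fun i j => h i j)
  obtain ⟨i, j, hij⟩ := h1
  set c : V → ℝ := fun x => F x j with hc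
  have hfix : ∀ x, ∑ y, F x y * c y = c x := by
    intro x
    simpa [hc, Matrix.mul_apply] using congrFun (congrFun hi x) j
  have hcs : ∀ x, (c x)^2 ≤ F x x * ∑ y, (c y)^2 := by
    intro x
    have := Finset.sum_mul_sq_le_sq_mul_sq Finset.univ (fun y => F x y) c
    rw [hfix x] at this
    calc (c x)^2 ≤ (∑ y, (F x y)^2) * ∑ y, (c y)^2 := this
      _ = F x x * ∑ y, (c y)^2 := by rw [rowsq F hs hi]
  have hpos : 0 < ∑ y, (c y)^2 := by
    have : (c i)^2 > 0 := by positivity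
    exact lt_of_lt_of_le this
      (Finset.single_le_sum (f := fun y => (c y)^2) (fun y _ => sq_nonneg _) (Finset.mem_univ i))
  have hsum : ∑ x, (c x)^2 ≤ F.trace * ∑ y, (c y)^2 := by
    rw [Matrix.trace, Finset.sum_mul]
    exact Finset.sum_le_sum fun x _ => hcs x
  nlinarith [hsum, hpos]

private lemma sq_eq_diag (F : Matrix V V ℝ) (hs : F.IsSymm) (hi : F * F = F)
    (htr : F.trace = 1) : ∀ u v, (F u v)^2 = F u u * F v v := by
  have hle : ∀ u v, (F u v)^2 ≤ F u u * F v v := by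
    intro u v
    have hexp : F u v = ∑ k, F u k * F v k := by
      have : ∀ k, F k v = F v k := fun k => hs.apply v k
      conv_lhs => rw [← hi]
      rw [Matrix.mul_apply]
      exact Finset.sum_congr rfl fun k _ => by rw [this k]
    calc (F u v)^2 = (∑ k, F u k * F v k)^2 := by rw [hexp]
      _ ≤ (∑ k, (F u k)^2) * ∑ k, (F v k)^2 := Finset.sum_mul_sq_le_sq_mul_sq _ _ _
      _ = F u u * F v v := by rw [rowsq F hs hi, rowsq F hs hi]
  have htot : ∑ u, ∑ v, (F u u * F v v - (F u v)^2) = 0 := by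
    have h2 : ∑ u, ∑ v, (F u v)^2 = 1 := by
      rw [← htr, Matrix.trace]
      exact Finset.sum_congr rfl fun u _ => rowsq F hs hi u
    have h3 : ∑ u, ∑ v, F u u * F v v = 1 := by
      simp_rw [← Finset.mul_sum, ← Finset.sum_mul]
      rw [show ∑ v, F v v = F.trace from rfl, htr]; ring
    simp only [Finset.sum_sub_distrib, h2, h3, sub_self]
  intro u v
  have := (Finset.sum_eq_zero_iff_of_nonneg (fun u _ => Finset.sum_nonneg
      (fun v _ => sub_nonneg.2 (hle u v)))).1 htot u (Finset.mem_univ u)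
  have := (Finset.sum_eq_zero_iff_of_nonneg (fun v _ => sub_nonneg.2 (hle u v))).1 this v
      (Finset.mem_univ v)
  linarith

private lemma walk_closure {T : SimpleGraph V} {S : Set V}
    (hcl : ∀ ⦃a⦄, a ∈ S → ∀ ⦃b⦄, T.Adj a b → b ∈ S) :
    ∀ {a b : V}, T.Walk a b → a ∈ S → b ∈ S := by
  intro a b w
  induction w with
  | nil => exact id
  | cons h p ih => exact fun ha => ih (hcl ha h)

end aux


/-- If `T` is a tree on at least four vertices with simple eigenvalues and
`T` is not isomorphic to the path `P₄`, then `rank M̂(T) ≥ 3`. -/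
theorem rank_avgMixing_tree_ge_three {V : Type*} [Fintype V] [DecidableEq V]
    (T : SimpleGraph V) [DecidableRel T.Adj] (hT : T.IsTree)
    (hcard : 4 ≤ Fintype.card V)
    (hnotP4 : ¬ Nonempty (T ≃g SimpleGraph.pathGraph 4))
    (θ : Fin (Fintype.card V) → ℝ) (hθ : Function.Injective θ)
    (E : Fin (Fintype.card V) → Matrix V V ℝ)
    (hsymm : ∀ r, (E r).IsSymm)
    (horth : ∀ r s, E r * E s = if r = s then E r else 0)
    (hne : ∀ r, E r ≠ 0)
    (hsum : ∑ r, E r = 1)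
    (hdecomp : T.adjMatrix ℝ = ∑ r, θ r • E r) :
    3 ≤ (∑ r, E r ⊙ E r).rank := by
  classical
  have hEE : ∀ r, E r * E r = E r := fun r => by simpa using horth r r
  have hsym : ∀ r (u v : V), E r v u = E r u v := fun r u v => (hsymm r).apply u v
  -- traces are all equal to 1
  have htrsum : ∑ r, (E r).trace = (Fintype.card V : ℝ) := by
    rw [← Matrix.trace_sum, hsum, Matrix.trace_one]
  have htrge : ∀ r, 1 ≤ (E r).trace :=
    fun r => trace_ge_one (E r) (hsymm r) (hEE r) (hne r)
  have htr : ∀ r, (E r).trace = 1 := by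
    by_contra hcon
    push_neg at hcon
    obtain ⟨r0, h0⟩ := hcon
    have hlt : ∑ _r : Fin (Fintype.card V), (1:ℝ) < ∑ r, (E r).trace := by
      refine Finset.sum_lt_sum (fun r _ => htrge r) ⟨r0, Finset.mem_univ r0, ?_⟩
      exact lt_of_le_of_ne (htrge r0) (Ne.symm h0)
    rw [htrsum] at hlt
    simp at hlt
  have hsq : ∀ r (u v : V), (E r u v)^2 = E r u u * E r v v :=
    fun r => sq_eq_diag (E r) (hsymm r) (hEE r) (htr r)
  -- eigen-equation
  have hAE : ∀ s, T.adjMatrix ℝ * E s = θ s • E s := by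
    intro s
    rw [hdecomp, Finset.sum_mul]
    rw [Finset.sum_eq_single s]
    · rw [Matrix.smul_mul, horth s s]; simp
    · intro r _ hrs
      rw [Matrix.smul_mul, horth r s, if_neg hrs, smul_zero]
    · intro h; exact absurd (Finset.mem_univ s) h
  -- the diagonal functions
  set δ : Fin (Fintype.card V) → V → ℝ := fun r u => E r u u with hδdef
  have hδsum : ∀ u, ∑ r, δ r u = 1 := by
    intro u
    have h1 := congrFun (congrFun hsum u) u
    rw [Matrix.sum_apply] at h1
    simpa [Matrix.one_apply, hδdef] using h1
  have hδdeg : ∀ u, ∑ r, θ r ^ 2 * δ r u = (T.degree u : ℝ) := by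
    intro u
    have hAA : T.adjMatrix ℝ * T.adjMatrix ℝ = ∑ s, θ s ^ 2 • E s := by
      conv_lhs => rw [hdecomp, Finset.sum_mul]
      refine Finset.sum_congr rfl fun s _ => ?_
      rw [Matrix.smul_mul, Matrix.mul_sum]
      rw [Finset.sum_eq_single s]
      · rw [Matrix.mul_smul, hEE s, smul_smul, sq]
      · intro r _ hrs
        rw [Matrix.mul_smul, horth s r, if_neg (Ne.symm hrs), smul_zero]
      · intro h; exact absurd (Finset.mem_univ s) h
    have h1 := congrFun (congrFun hAA u) u
    rw [Matrix.sum_apply] at h1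
    rw [SimpleGraph.adjMatrix_mul_self_apply_self] at h1
    simpa [hδdef] using h1.symm
  have hδnn : ∀ r u, 0 ≤ δ r u := by
    intro r u
    have := rowsq (E r) (hsymm r) (hEE r) u
    rw [hδdef]
    calc (0:ℝ) ≤ ∑ v, (E r u v)^2 := Finset.sum_nonneg fun v _ => sq_nonneg _
      _ = E r u u := this
  -- reduce to the span of the diagonal vectors
  set N : Matrix (Fin (Fintype.card V)) V ℝ := Matrix.of δ with hNdef
  have hM : ∑ r, E r ⊙ E r = Nᵀ * N := by
    ext u v
    rw [Matrix.sum_apply, Matrix.mul_apply]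
    refine Finset.sum_congr rfl fun r _ => ?_
    rw [Matrix.hadamard_apply, Matrix.transpose_apply]
    have := hsq r u v
    rw [sq] at this
    rw [this]
    rfl
  rw [hM, Matrix.rank_transpose_mul_self]
  by_contra hlt
  push_neg at hlt
  have hrank2 : Module.finrank ℝ (Submodule.span ℝ (Set.range δ)) ≤ 2 := by
    have h1 : N.rank = Nᵀ.rank := (Matrix.rank_transpose N).symm
    have h2 := Matrix.rank_eq_finrank_span_cols Nᵀ
    change Nᵀ.rank = Module.finrank ℝ (Submodule.span ℝ (Set.range N)) at h2
    have h3 : Set.range N = Set.range δ := rfl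
    rw [h3] at h2
    omega
  -- basic degree facts
  have hedge : ∑ v, T.degree v = 2 * (Fintype.card V - 1) := by
    have h1 := SimpleGraph.sum_degrees_eq_twice_card_edges T
    have h2 := hT.card_edgeFinset
    omega
  have hdegpos : ∀ v : V, 0 < T.degree v := by
    intro v
    rw [SimpleGraph.degree_pos_iff_exists_adj]
    obtain ⟨w, hw⟩ := Fintype.exists_ne_of_one_lt_card (by omega) v
    obtain ⟨p⟩ := hT.isConnected.preconnected v w
    cases p with
    | nil => exact absurd rfl hw
    | cons h q => exact ⟨_, h⟩
  have hleaf : ∃ ℓ, T.degree ℓ = 1 := by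
    by_contra hno
    push_neg at hno
    have h2 : ∀ v : V, 2 ≤ T.degree v := fun v => by
      have := hdegpos v; have := hno v; omega
    have h3 : 2 * Fintype.card V ≤ ∑ v, T.degree v := by
      calc 2 * Fintype.card V = ∑ _v : V, 2 := by
            rw [Finset.sum_const, smul_eq_mul, Finset.card_univ, mul_comm]
        _ ≤ _ := Finset.sum_le_sum fun v _ => h2 v
    omega
  obtain ⟨ℓ, hℓ⟩ := hleaf
  have hbig : ∃ w, 2 ≤ T.degree w := by
    by_contra hno
    push_neg at hno
    have h2 : ∀ v : V, T.degree v = 1 := fun v => by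
      have := hdegpos v; have := hno v; omega
    have h3 : ∑ v, T.degree v = Fintype.card V := by
      rw [Finset.sum_congr rfl fun v _ => h2 v, Finset.sum_const, smul_eq_mul,
        Finset.card_univ, mul_one]
    omega
  obtain ⟨w0, hw0⟩ := hbig
  -- the span of the diagonal vectors is spanned by ones and degv
  set ones : V → ℝ := fun _ => 1 with hones
  set degv : V → ℝ := fun u => (T.degree u : ℝ) with hdegv
  have honesW : ones ∈ Submodule.span ℝ (Set.range δ) := by
    have h4 : ones = ∑ r, δ r := by
      funext u; rw [Finset.sum_apply]; exact (hδsum u).symm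
    rw [h4]
    exact Submodule.sum_mem _ fun r _ => Submodule.subset_span (Set.mem_range_self r)
  have hdegvW : degv ∈ Submodule.span ℝ (Set.range δ) := by
    have h4 : degv = ∑ r, θ r ^ 2 • δ r := by
      funext u
      rw [Finset.sum_apply]
      simp only [Pi.smul_apply, smul_eq_mul]
      exact (hδdeg u).symm
    rw [h4]
    exact Submodule.sum_mem _ fun r _ =>
      Submodule.smul_mem _ _ (Submodule.subset_span (Set.mem_range_self r))
  have hcast2 : (2:ℝ) ≤ (T.degree w0 : ℝ) := by exact_mod_cast hw0
  have hli : LinearIndependent ℝ ![ones, degv] := by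
    rw [LinearIndependent.pair_iff]
    intro s t hst
    have h1 := congrFun hst ℓ
    have h2 := congrFun hst w0
    simp only [Pi.add_apply, Pi.smul_apply, smul_eq_mul, Pi.zero_apply, hones, hdegv, hℓ,
      Nat.cast_one, mul_one] at h1 h2
    have ht : t = 0 := by nlinarith
    constructor
    · rw [ht] at h1; linarith
    · exact ht
  have hP : Submodule.span ℝ ({ones, degv} : Set (V → ℝ)) = Submodule.span ℝ (Set.range δ) := by
    apply Submodule.eq_of_le_of_finrank_le
    · rw [Submodule.span_le]
      intro x hx
      rcases hx with rfl | hx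
      · exact honesW
      · rw [Set.mem_singleton_iff] at hx; subst hx; exact hdegvW
    · have hr : Set.range ![ones, degv] = ({ones, degv} : Set (V → ℝ)) := by
        ext x
        simp [Fin.exists_fin_two, or_comm]
      have hcardpair : Module.finrank ℝ
          (Submodule.span ℝ ({ones, degv} : Set (V → ℝ))) = 2 := by
        rw [← hr, finrank_span_eq_card hli]
        simp
      rw [hcardpair]
      exact hrank2
  have habx : ∀ r, ∃ a b : ℝ, ∀ u, δ r u = a + b * (T.degree u : ℝ) := by
    intro r
    have hmem : δ r ∈ Submodule.span ℝ ({ones, degv} : Set (V → ℝ)) := by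
      rw [hP]; exact Submodule.subset_span (Set.mem_range_self r)
    obtain ⟨a, b, hab⟩ := Submodule.mem_span_pair.1 hmem
    refine ⟨a, b, fun u => ?_⟩
    have h5 := congrFun hab u
    simp only [Pi.add_apply, Pi.smul_apply, smul_eq_mul, hones, hdegv, mul_one] at h5
    exact h5.symm
  choose a b hab using habx
  -- connectivity closure
  have hclosure : ∀ (S : Set V), (∀ ⦃x⦄, x ∈ S → ∀ ⦃y⦄, T.Adj x y → y ∈ S) →
      ∀ x ∈ S, ∀ y : V, y ∈ S := by
    intro S hcl x hx y
    obtain ⟨p⟩ := hT.isConnected.preconnected x y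
    exact walk_closure hcl p hx
  -- neighbour finset of a leaf
  have hnbrleaf : ∀ u p : V, T.degree u = 1 → T.Adj u p → T.neighborFinset u = {p} := by
    intro u p hdeg hadj
    have hmem : p ∈ T.neighborFinset u := (T.mem_neighborFinset u p).2 hadj
    have hcard1 : (T.neighborFinset u).card = 1 := hdeg
    obtain ⟨x, hx⟩ := Finset.card_eq_one.1 hcard1
    rw [hx] at hmem ⊢
    rw [Finset.mem_singleton] at hmem
    rw [hmem]
  -- row relation at a leaf
  have hrow : ∀ u p : V, T.degree u = 1 → T.Adj u p →
      ∀ r (x : V), E r p x = θ r * E r u x := by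
    intro u p hdeg hadj r x
    have h1 := congrFun (congrFun (hAE r) u) x
    rw [SimpleGraph.adjMatrix_mul_apply, hnbrleaf u p hdeg hadj, Finset.sum_singleton] at h1
    simpa using h1
  -- structure dichotomy for trees without the two patterns
  have hdich : (∃ u u' p : V, u ≠ u' ∧ T.degree u = 1 ∧ T.degree u' = 1 ∧
        T.Adj u p ∧ T.Adj u' p) ∨
      (∃ u0 u1 : V, T.degree u0 = 1 ∧ T.Adj u0 u1 ∧ T.degree u1 = 2) := by
    by_contra hcon
    push_neg at hcon
    obtain ⟨hshare, hdeg2⟩ := hcon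
    have hadjleaf : ∀ u v : V, T.Adj u v → T.degree u = 1 → T.degree v = 1 → False := by
      intro u v huv hu hv
      have hcl : ∀ ⦃x⦄, x ∈ ({u, v} : Set V) → ∀ ⦃y⦄, T.Adj x y → y ∈ ({u, v} : Set V) := by
        intro x hx y hxy
        rcases hx with rfl | hx
        · have h5 := hnbrleaf x v hu huv
          have hy : y ∈ T.neighborFinset x := (T.mem_neighborFinset _ _).2 hxy
          rw [h5, Finset.mem_singleton] at hy
          right; exact hy
        · rw [Set.mem_singleton_iff] at hx; subst hx
          have h5 := hnbrleaf x u hv huv.symm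
          have hy : y ∈ T.neighborFinset x := (T.mem_neighborFinset _ _).2 hxy
          rw [h5, Finset.mem_singleton] at hy
          left; exact hy
      have hall := hclosure _ hcl u (Set.mem_insert u _)
      have hsub : (Finset.univ : Finset V) ⊆ {u, v} := by
        intro x _
        have hx := hall x
        rcases hx with rfl | hx
        · exact Finset.mem_insert_self _ _
        · rw [Set.mem_singleton_iff] at hx; subst hx
          exact Finset.mem_insert_of_mem (Finset.mem_singleton_self _)
      have hle : Fintype.card V ≤ 2 := by
        calc Fintype.card V = (Finset.univ : Finset V).card := (Finset.card_univ).symm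
          _ ≤ ({u, v} : Finset V).card := Finset.card_le_card hsub
          _ ≤ 2 := (Finset.card_insert_le _ _).trans (by simp)
      omega
    have hnbr : ∀ v : V, ∃ p, T.Adj v p := fun v =>
      (SimpleGraph.degree_pos_iff_exists_adj T v).1 (hdegpos v)
    choose f hf using hnbr
    set L : Finset V := Finset.univ.filter (fun v => T.degree v = 1) with hLdef
    have hfdeg : ∀ v ∈ L, 3 ≤ T.degree (f v) := by
      intro v hv
      rw [hLdef, Finset.mem_filter] at hv
      have h1 : T.degree (f v) ≠ 1 := fun h => hadjleaf v (f v) (hf v) hv.2 h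
      have h2 : T.degree (f v) ≠ 2 := fun h => hdeg2 v (f v) hv.2 (hf v) h
      have := hdegpos (f v)
      omega
    have hinj : Set.InjOn f L := by
      intro x hx y hy hxy
      by_contra hne'
      rw [Finset.coe_filter] at hx hy
      exact hshare x y (f x) hne' hx.2 hy.2 (hf x) (hxy ▸ hf y)
    set H : Finset V := L.image f with hHdef
    have hHL : H ⊆ Finset.univ \ L := by
      intro x hx
      rw [hHdef, Finset.mem_image] at hx
      obtain ⟨v, hv, rfl⟩ := hx
      rw [Finset.mem_sdiff]
      refine ⟨Finset.mem_univ _, ?_⟩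
      rw [hLdef, Finset.mem_filter]
      push_neg
      intro _
      have := hfdeg v hv
      omega
    have hcardH : H.card = L.card := Finset.card_image_of_injOn hinj
    have hLsub : L ⊆ Finset.univ := Finset.subset_univ L
    have hsplit : ∑ v ∈ Finset.univ \ L, T.degree v + ∑ v ∈ L, T.degree v
        = ∑ v, T.degree v := Finset.sum_sdiff hLsub
    have hLsum : ∑ v ∈ L, T.degree v = L.card := by
      rw [Finset.sum_congr rfl (fun v hv => ?_), Finset.sum_const, smul_eq_mul, mul_one]
      rw [hLdef, Finset.mem_filter] at hv
      exact hv.2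
    have hrest : 2 * (Finset.univ \ L).card + H.card ≤ ∑ v ∈ Finset.univ \ L, T.degree v := by
      have hpt : ∀ v ∈ Finset.univ \ L, 2 + (if v ∈ H then 1 else 0) ≤ T.degree v := by
        intro v hv
        by_cases hvH : v ∈ H
        · rw [if_pos hvH]
          rw [hHdef, Finset.mem_image] at hvH
          obtain ⟨w, hw, rfl⟩ := hvH
          have := hfdeg w hw
          omega
        · rw [if_neg hvH]
          rw [Finset.mem_sdiff, hLdef, Finset.mem_filter] at hv
          have h1 : T.degree v ≠ 1 := by
            intro h
            exact hv.2 ⟨Finset.mem_univ _, h⟩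
          have := hdegpos v
          omega
      calc 2 * (Finset.univ \ L).card + H.card
          = ∑ v ∈ Finset.univ \ L, (2 + if v ∈ H then 1 else 0) := by
            rw [Finset.sum_add_distrib, Finset.sum_const, smul_eq_mul, mul_comm]
            congr 1
            rw [Finset.sum_ite_mem, Finset.inter_eq_right.2 hHL, Finset.sum_const,
              smul_eq_mul, mul_one]
        _ ≤ ∑ v ∈ Finset.univ \ L, T.degree v := Finset.sum_le_sum hpt
    have hcards : (Finset.univ \ L).card = Fintype.card V - L.card := by
      rw [Finset.card_sdiff_of_subset hLsub, Finset.card_univ]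
    have hLle : L.card ≤ Fintype.card V := by
      rw [← Finset.card_univ]
      exact Finset.card_le_card hLsub
    omega
  have hδE : ∀ r (v : V), δ r v = E r v v := fun _ _ => rfl
  rcases hdich with ⟨u, u', p, huu', hu, hu', hup, hu'p⟩ | ⟨u0, u1, hu0, h01, hdu1⟩
  · -- CASE A : two leaves with a common neighbour
    have hcols : ∀ r, θ r ≠ 0 → ∀ x : V, E r u x = E r u' x := by
      intro r hr x
      have h1 := hrow u p hu hup r x
      have h2 := hrow u' p hu' hu'p r x
      exact mul_left_cancel₀ hr (by rw [← h1, ← h2])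
    have hsumuu : ∑ r, E r u u = 1 := hδsum u
    have hsumuu' : ∑ r, E r u u' = 0 := by
      have h3 := congrFun (congrFun hsum u) u'
      rw [Matrix.sum_apply] at h3
      rw [h3, Matrix.one_apply_ne huu']
    have hzero : ∃ r0, θ r0 = 0 := by
      by_contra hz
      push_neg at hz
      have h4 : ∀ r : Fin (Fintype.card V), E r u u = E r u u' := by
        intro r
        have h5 := hcols r (hz r) u
        rw [← hsym r u u']
        rw [← h5]
      rw [Finset.sum_congr rfl fun r _ => h4 r, hsumuu'] at hsumuu
      exact absurd hsumuu (by norm_num)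
    obtain ⟨r0, hr0⟩ := hzero
    have hothers : ∀ r, r ≠ r0 → E r u u = E r u u' := by
      intro r hr
      have hθr : θ r ≠ 0 := fun h => hr (hθ (h.trans hr0.symm))
      have h5 := hcols r hθr u
      rw [← hsym r u u']
      rw [← h5]
    have hEr0 : E r0 u u' = E r0 u u - 1 := by
      rw [← Finset.add_sum_erase _ _ (Finset.mem_univ r0)] at hsumuu hsumuu'
      have hc : ∑ r ∈ Finset.univ.erase r0, E r u u
          = ∑ r ∈ Finset.univ.erase r0, E r u u' :=
        Finset.sum_congr rfl fun r hr => hothers r (Finset.ne_of_mem_erase hr)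
      linarith
    have hleafδ : ∀ r (x : V), T.degree x = 1 → δ r x = a r + b r := by
      intro r x hx
      have h5 := hab r x
      rw [hx] at h5
      simpa using h5
    have hu'u : E r0 u' u' = E r0 u u := by
      have h5 := hleafδ r0 u hu
      have h6 := hleafδ r0 u' hu'
      rw [hδE] at h5 h6
      rw [h6, ← h5]
    have hα : E r0 u u = 1/2 := by
      have h1 := hsq r0 u u'
      rw [hEr0, hu'u] at h1
      nlinarith
    have hsumδ : ∑ x, δ r0 x = 1 := by
      have h5 := htr r0
      rw [Matrix.trace] at h5
      simpa [Matrix.diag, hδE] using h5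
    have hpu : p ≠ u := fun h => T.irrefl (h ▸ hup)
    have hpu' : p ≠ u' := fun h => T.irrefl (h ▸ hu'p)
    have hrest0 : ∀ x : V, x ≠ u → x ≠ u' → δ r0 x = 0 := by
      intro x hxu hxu'
      have hsplit := Finset.sum_sdiff (Finset.subset_univ ({u, u'} : Finset V)) (f := δ r0)
      have hpair : ∑ y ∈ ({u, u'} : Finset V), δ r0 y = 1 := by
        rw [Finset.sum_pair huu']
        rw [hδE, hδE, hα, hu'u, hα]
        norm_num
      have hzero' : ∑ y ∈ Finset.univ \ {u, u'}, δ r0 y = 0 := by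
        rw [hsumδ] at hsplit
        linarith
      refine (Finset.sum_eq_zero_iff_of_nonneg fun y _ => hδnn r0 y).1 hzero' x ?_
      rw [Finset.mem_sdiff]
      exact ⟨Finset.mem_univ _, by simp [hxu, hxu']⟩
    have habu : a r0 + b r0 = 1/2 := by
      have h5 := hleafδ r0 u hu
      rw [hδE, hα] at h5
      linarith
    have habp : a r0 + b r0 * (T.degree p : ℝ) = 0 := by
      have h5 := hab r0 p
      rw [hrest0 p hpu hpu'] at h5
      linarith
    have hb0 : b r0 ≠ 0 := by
      intro hb
      rw [hb] at habu habp
      simp at habu habp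
      linarith
    have hdegeq : ∀ x : V, x ≠ u → x ≠ u' → T.degree x = T.degree p := by
      intro x hxu hxu'
      have h2 : a r0 + b r0 * (T.degree x : ℝ) = 0 := by
        have h5 := hab r0 x
        rw [hrest0 x hxu hxu'] at h5
        linarith
      have h6 : (T.degree x : ℝ) = (T.degree p : ℝ) :=
        mul_left_cancel₀ hb0 (by linarith)
      exact_mod_cast h6
    have hdp : T.degree p = 2 := by
      have hsplit : ∑ y ∈ Finset.univ \ ({u, u'} : Finset V), T.degree y
          + ∑ y ∈ ({u, u'} : Finset V), T.degree y = ∑ v, T.degree v :=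
        Finset.sum_sdiff (Finset.subset_univ _)
      have hpairsum : ∑ y ∈ ({u, u'} : Finset V), T.degree y = 2 := by
        rw [Finset.sum_pair huu', hu, hu']

      have hcardrest : (Finset.univ \ ({u, u'} : Finset V)).card = Fintype.card V - 2 := by
        rw [Finset.card_sdiff_of_subset (Finset.subset_univ _), Finset.card_univ, Finset.card_pair huu']
      have hcg : ∀ y ∈ Finset.univ \ ({u, u'} : Finset V), T.degree y = T.degree p := by
        intro y hy
        rw [Finset.mem_sdiff, Finset.mem_insert, Finset.mem_singleton] at hy
        exact hdegeq y (fun h => hy.2 (Or.inl h)) (fun h => hy.2 (Or.inr h))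
      have hrestdeg : ∑ y ∈ Finset.univ \ ({u, u'} : Finset V), T.degree y
          = (Fintype.card V - 2) * T.degree p := by
        rw [Finset.sum_congr rfl hcg, Finset.sum_const, smul_eq_mul, hcardrest]
      have hmul : (Fintype.card V - 2) * T.degree p = (Fintype.card V - 2) * 2 := by
        rw [← hrestdeg]
        omega
      exact Nat.eq_of_mul_eq_mul_left (by omega) hmul
    have hnbrp : T.neighborFinset p = {u, u'} := by
      refine (Finset.eq_of_subset_of_card_le ?_ ?_).symm
      · intro x hx
        rw [Finset.mem_insert, Finset.mem_singleton] at hx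
        rcases hx with rfl | rfl
        · exact (T.mem_neighborFinset _ _).2 hup.symm
        · exact (T.mem_neighborFinset _ _).2 hu'p.symm
      · rw [Finset.card_pair huu']
        exact le_of_eq hdp
    have hcl : ∀ ⦃x⦄, x ∈ ({u, u', p} : Set V) → ∀ ⦃y⦄, T.Adj x y →
        y ∈ ({u, u', p} : Set V) := by
      intro x hx y hxy
      have hy : y ∈ T.neighborFinset x := (T.mem_neighborFinset _ _).2 hxy
      rcases hx with rfl | rfl | rfl
      · rw [hnbrleaf x p hu hup, Finset.mem_singleton] at hy
        right; right; exact hy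
      · rw [hnbrleaf x p hu' hu'p, Finset.mem_singleton] at hy
        right; right; exact hy
      · rw [hnbrp, Finset.mem_insert, Finset.mem_singleton] at hy
        rcases hy with rfl | rfl
        · left; rfl
        · right; left; rfl
    have hall := hclosure _ hcl u (Set.mem_insert u _)
    have hsub : (Finset.univ : Finset V) ⊆ {u, u', p} := by
      intro x _
      have hx := hall x
      rcases hx with rfl | rfl | rfl
      · exact Finset.mem_insert_self _ _
      · exact Finset.mem_insert_of_mem (Finset.mem_insert_self _ _)
      · exact Finset.mem_insert_of_mem (Finset.mem_insert_of_mem (Finset.mem_singleton_self _))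
    have hle3 : Fintype.card V ≤ 3 := by
      calc Fintype.card V = (Finset.univ : Finset V).card := (Finset.card_univ).symm
        _ ≤ ({u, u', p} : Finset V).card := Finset.card_le_card hsub
        _ ≤ 3 := by
            refine (Finset.card_insert_le _ _).trans ?_
            have := (Finset.card_insert_le u' ({p} : Finset V))
            simp at this ⊢
            omega
    omega
  · -- CASE B : a leaf whose neighbour has degree 2
    have hcard2' : (T.neighborFinset u1).card = 2 := hdu1
    obtain ⟨x, y, hxy, hset⟩ := Finset.card_eq_two.1 hcard2'
    have hmem0 : u0 ∈ T.neighborFinset u1 := (T.mem_neighborFinset _ _).2 h01.symm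
    rw [hset, Finset.mem_insert, Finset.mem_singleton] at hmem0
    obtain ⟨u2, hu2ne, hnb1⟩ : ∃ u2, u2 ≠ u0 ∧ T.neighborFinset u1 = {u0, u2} := by
      rcases hmem0 with rfl | rfl
      · exact ⟨y, Ne.symm hxy, hset⟩
      · exact ⟨x, hxy, by rw [hset, Finset.pair_comm]⟩
    have hadj12 : T.Adj u1 u2 := by
      have : u2 ∈ T.neighborFinset u1 := by
        rw [hnb1]
        exact Finset.mem_insert_of_mem (Finset.mem_singleton_self _)
      exact (T.mem_neighborFinset _ _).1 this
    have hrow1 : ∀ r (x : V), E r u1 x = θ r * E r u0 x := fun r x => hrow u0 u1 hu0 h01 r x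
    have hrow2 : ∀ r (x : V), E r u0 x + E r u2 x = θ r * E r u1 x := by
      intro r z
      have h1 := congrFun (congrFun (hAE r) u1) z
      rw [SimpleGraph.adjMatrix_mul_apply, hnb1, Finset.sum_pair (Ne.symm hu2ne)] at h1
      simpa using h1
    have hrowu2 : ∀ r (x : V), E r u2 x = (θ r ^ 2 - 1) * E r u0 x := by
      intro r z
      have h1 := hrow2 r z
      rw [hrow1 r z] at h1
      have h2 : E r u2 z = θ r * (θ r * E r u0 z) - E r u0 z := by linarith
      rw [h2]
      ring
    have hδ1 : ∀ r, δ r u1 = θ r ^ 2 * δ r u0 := by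
      intro r
      rw [hδE, hδE, hrow1 r u1, ← hsym r u0 u1, hrow1 r u0]
      ring
    have hδ2 : ∀ r, δ r u2 = (θ r ^ 2 - 1) ^ 2 * δ r u0 := by
      intro r
      rw [hδE, hδE, hrowu2 r u2, ← hsym r u0 u2, hrowu2 r u0]
      ring
    have habu0 : ∀ r, δ r u0 = a r + b r := by
      intro r
      have h5 := hab r u0
      rw [hu0] at h5
      simpa using h5
    have habu1 : ∀ r, δ r u1 = a r + b r * 2 := by
      intro r
      have h5 := hab r u1
      rw [hdu1] at h5
      simpa using h5
    have hL : ∀ r, δ r u0 ≠ 0 := by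
      intro r h0
      have h1 : a r + b r = 0 := by rw [← habu0 r]; exact h0
      have h2 : a r + b r * 2 = 0 := by
        rw [← habu1 r, hδ1 r, h0]
        ring
      have hb' : b r = 0 := by linarith
      have ha' : a r = 0 := by linarith
      apply hne r
      ext v w
      have h3 : δ r v = 0 := by rw [hab r v, ha', hb']; ring
      have h4 : δ r w = 0 := by rw [hab r w, ha', hb']; ring
      have h5 := hsq r v w
      rw [hδE] at h3
      rw [hδE] at h4
      rw [h3, h4] at h5
      have h6 : (E r v w) ^ 2 = 0 := by rw [h5]; ring
      have h7 := pow_eq_zero_iff (n := 2) (by norm_num) |>.1 h6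
      simpa using h7
    set d2 : ℝ := (T.degree u2 : ℝ) with hd2def
    have hquad : ∀ r, θ r ^ 2 * θ r ^ 2 - (1 + d2) * θ r ^ 2 + (d2 - 1) = 0 := by
      intro r
      have h1 : θ r ^ 2 * δ r u0 = δ r u0 + b r := by
        rw [← hδ1 r, habu1 r]
        have := habu0 r
        linarith
      have hbr : b r = (θ r ^ 2 - 1) * δ r u0 := by nlinarith [h1]
      have h2 : (θ r ^ 2 - 1) ^ 2 * δ r u0 = δ r u0 + b r * (d2 - 1) := by
        rw [← hδ2 r, hab r u2, habu0 r]
        have := habu0 r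
        rw [← hd2def]
        nlinarith [hbr]
      have h3 : (θ r ^ 2 * θ r ^ 2 - (1 + d2) * θ r ^ 2 + (d2 - 1)) * δ r u0 = 0 := by
        nlinarith [h2, hbr]
      rcases mul_eq_zero.1 h3 with h4 | h4
      · exact h4
      · exact absurd h4 (hL r)
    by_cases hn5 : 5 ≤ Fintype.card V
    · -- at most four eigenvalues : contradiction
      set S : Finset ℝ := Finset.univ.image (fun r => θ r ^ 2) with hSdef
      have hScard : S.card ≤ 2 := by
        by_contra hS
        push_neg at hS
        obtain ⟨x1, x2, x3, hx1, hx2, hx3, h12, h13, h23⟩ := Finset.two_lt_card_iff.1 hS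
        rw [hSdef, Finset.mem_image] at hx1 hx2 hx3
        obtain ⟨r1, _, rfl⟩ := hx1
        obtain ⟨r2, _, rfl⟩ := hx2
        obtain ⟨r3, _, rfl⟩ := hx3
        have e1 := hquad r1
        have e2 := hquad r2
        have e3 := hquad r3
        have f12 : (θ r1 ^ 2 - θ r2 ^ 2) * (θ r1 ^ 2 + θ r2 ^ 2 - (1 + d2)) = 0 := by
          linear_combination e1 - e2
        have f13 : (θ r1 ^ 2 - θ r3 ^ 2) * (θ r1 ^ 2 + θ r3 ^ 2 - (1 + d2)) = 0 := by
          linear_combination e1 - e3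
        have g12 : θ r1 ^ 2 + θ r2 ^ 2 - (1 + d2) = 0 :=
          (mul_eq_zero.1 f12).resolve_left (sub_ne_zero.2 h12)
        have g13 : θ r1 ^ 2 + θ r3 ^ 2 - (1 + d2) = 0 :=
          (mul_eq_zero.1 f13).resolve_left (sub_ne_zero.2 h13)
        exact h23 (by linarith)
      have hfib : ∀ v ∈ S, (Finset.univ.filter (fun r => θ r ^ 2 = v)).card ≤ 2 := by
        intro v _
        by_contra hf
        push_neg at hf
        obtain ⟨r1, r2, r3, hr1, hr2, hr3, h12, h13, h23⟩ := Finset.two_lt_card_iff.1 hf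
        rw [Finset.mem_filter] at hr1 hr2 hr3
        have k12 : (θ r1 - θ r2) * (θ r1 + θ r2) = 0 := by
          have : θ r1 ^ 2 = θ r2 ^ 2 := by rw [hr1.2, hr2.2]
          linear_combination this
        have k13 : (θ r1 - θ r3) * (θ r1 + θ r3) = 0 := by
          have : θ r1 ^ 2 = θ r3 ^ 2 := by rw [hr1.2, hr3.2]
          linear_combination this
        have n12 : θ r1 ≠ θ r2 := fun h => h12 (hθ h)
        have n13 : θ r1 ≠ θ r3 := fun h => h13 (hθ h)
        have m12 : θ r1 + θ r2 = 0 := (mul_eq_zero.1 k12).resolve_left (sub_ne_zero.2 n12)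
        have m13 : θ r1 + θ r3 = 0 := (mul_eq_zero.1 k13).resolve_left (sub_ne_zero.2 n13)
        have : θ r2 = θ r3 := by linarith
        exact h23 (hθ this)
      have hcount := Finset.card_eq_sum_card_fiberwise
        (f := fun r : Fin (Fintype.card V) => θ r ^ 2) (s := Finset.univ) (t := S)
        (fun x _ => Finset.mem_image_of_mem _ (Finset.mem_univ x))
      have hle : (Finset.univ : Finset (Fin (Fintype.card V))).card ≤ 2 * S.card := by
        rw [hcount]
        calc ∑ v ∈ S, (Finset.univ.filter (fun r => θ r ^ 2 = v)).card
            ≤ ∑ _v ∈ S, 2 := Finset.sum_le_sum hfib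
          _ = 2 * S.card := by rw [Finset.sum_const, smul_eq_mul, mul_comm]
      rw [Finset.card_univ, Fintype.card_fin] at hle
      omega
    · -- exactly four vertices : T is the path P₄
      have hn4 : Fintype.card V = 4 := by omega
      have h01ne : u0 ≠ u1 := T.ne_of_adj h01
      have h02ne : u0 ≠ u2 := Ne.symm hu2ne
      have h12ne : u1 ≠ u2 := T.ne_of_adj hadj12
      obtain ⟨u3, hu3⟩ : ∃ u3, u3 ∉ ({u0, u1, u2} : Finset V) := by
        by_contra hcon
        push_neg at hcon
        have hsub : (Finset.univ : Finset V) ⊆ {u0, u1, u2} := fun z _ => hcon z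
        have hc := Finset.card_le_card hsub
        rw [Finset.card_univ, hn4] at hc
        have : ({u0, u1, u2} : Finset V).card ≤ 3 :=
          (Finset.card_insert_le _ _).trans (by
            have := Finset.card_insert_le u1 ({u2} : Finset V)
            simp at this ⊢
            omega)
        omega
      rw [Finset.mem_insert, Finset.mem_insert, Finset.mem_singleton] at hu3
      push_neg at hu3
      obtain ⟨h30, h31, h32⟩ := hu3
      have hnadj03 : ¬ T.Adj u0 u3 := by
        intro hadj
        have hm := (T.mem_neighborFinset _ _).2 hadj
        rw [hnbrleaf u0 u1 hu0 h01, Finset.mem_singleton] at hm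
        exact h31 hm
      have hnadj13 : ¬ T.Adj u1 u3 := by
        intro hadj
        have hm := (T.mem_neighborFinset _ _).2 hadj
        rw [hnb1, Finset.mem_insert, Finset.mem_singleton] at hm
        rcases hm with h' | h'
        · exact h30 h'
        · exact h32 h'
      have hnadj02 : ¬ T.Adj u0 u2 := by
        intro hadj
        have hm := (T.mem_neighborFinset _ _).2 hadj
        rw [hnbrleaf u0 u1 hu0 h01, Finset.mem_singleton] at hm
        exact h12ne hm.symm
      have hc4 : ({u0, u1, u2, u3} : Finset V).card = 4 := by
        rw [Finset.card_insert_of_notMem (by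
              simp only [Finset.mem_insert, Finset.mem_singleton]
              push_neg
              exact ⟨h01ne, h02ne, fun h => h30 h.symm⟩),
          Finset.card_insert_of_notMem (by
              simp only [Finset.mem_insert, Finset.mem_singleton]
              push_neg
              exact ⟨h12ne, fun h => h31 h.symm⟩),
          Finset.card_insert_of_notMem (by
              simp only [Finset.mem_singleton]
              exact fun h => h32 h.symm),
          Finset.card_singleton]
      have huniv : (Finset.univ : Finset V) = {u0, u1, u2, u3} :=
        (Finset.eq_univ_of_card _ (by rw [hc4, hn4])).symm
      have hadj23 : T.Adj u2 u3 := by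
        by_contra hnadj23
        have hcl : ∀ ⦃z⦄, z ∈ ({u0, u1, u2} : Set V) → ∀ ⦃w⦄, T.Adj z w →
            w ∈ ({u0, u1, u2} : Set V) := by
          intro z hz w hzw
          rcases hz with rfl | rfl | hz3
          all_goals (try (rw [Set.mem_singleton_iff] at hz3; rw [hz3] at hzw))
          · have hw : w ∈ T.neighborFinset z := (T.mem_neighborFinset _ _).2 hzw
            rw [hnbrleaf z u1 hu0 h01, Finset.mem_singleton] at hw
            right; left; exact hw
          · have hw : w ∈ T.neighborFinset z := (T.mem_neighborFinset _ _).2 hzw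
            rw [hnb1, Finset.mem_insert, Finset.mem_singleton] at hw
            rcases hw with rfl | rfl
            · left; rfl
            · right; right; rfl
          · -- z = u2
            have hwuniv : w ∈ ({u0, u1, u2, u3} : Finset V) := by
              rw [← huniv]
              exact Finset.mem_univ w
            rw [Finset.mem_insert, Finset.mem_insert, Finset.mem_insert,
              Finset.mem_singleton] at hwuniv
            rcases hwuniv with rfl | rfl | rfl | rfl
            · exact absurd hzw.symm hnadj02
            · right; left; rfl
            · exact absurd rfl (T.ne_of_adj hzw)
            · exact absurd hzw hnadj23
        have hall := hclosure _ hcl u0 (Set.mem_insert u0 _)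
        have := hall u3
        rcases this with h' | h' | h'
        · exact h30 h'
        · exact h31 h'
        · exact h32 h'
      -- build the isomorphism with P₄
      have h03ne : u0 ≠ u3 := fun h => h30 h.symm
      have h13ne : u1 ≠ u3 := fun h => h31 h.symm
      have h23ne : u2 ≠ u3 := fun h => h32 h.symm
      set f : Fin 4 → V := ![u0, u1, u2, u3] with hfdef
      have hfv0 : f 0 = u0 := rfl
      have hfv1 : f 1 = u1 := rfl
      have hfv2 : f 2 = u2 := rfl
      have hfv3 : f 3 = u3 := rfl
      have hinjf : Function.Injective f := by
        intro i j hij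
        fin_cases i <;> fin_cases j <;>
          simp only [hfv0, hfv1, hfv2, hfv3, Fin.isValue] at hij ⊢ <;>
          first
            | rfl
            | (exact absurd hij (by first
                | exact h01ne | exact h02ne | exact h03ne
                | exact h12ne | exact h13ne | exact h23ne
                | exact h01ne.symm | exact h02ne.symm | exact h03ne.symm
                | exact h12ne.symm | exact h13ne.symm | exact h23ne.symm))
      have hbij : Function.Bijective f :=
        (Fintype.bijective_iff_injective_and_card f).2 ⟨hinjf, by rw [hn4, Fintype.card_fin]⟩
      refine hnotP4 ⟨SimpleGraph.Iso.symm ⟨Equiv.ofBijective f hbij, ?_⟩⟩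
      intro i j
      have hs01 := h01.symm
      have hs12 := hadj12.symm
      have hs23 := hadj23.symm
      have hns02 : ¬ T.Adj u2 u0 := fun h => hnadj02 h.symm
      have hns03 : ¬ T.Adj u3 u0 := fun h => hnadj03 h.symm
      have hns13 : ¬ T.Adj u3 u1 := fun h => hnadj13 h.symm
      have hirr0 : ¬ T.Adj u0 u0 := fun h => T.loopless.irrefl _ h
      have hirr1 : ¬ T.Adj u1 u1 := fun h => T.loopless.irrefl _ h
      have hirr2 : ¬ T.Adj u2 u2 := fun h => T.loopless.irrefl _ h
      have hirr3 : ¬ T.Adj u3 u3 := fun h => T.loopless.irrefl _ h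
      fin_cases i <;> fin_cases j <;>
        simp only [Equiv.ofBijective_apply, hfv0, hfv1, hfv2, hfv3, Fin.isValue,
          SimpleGraph.pathGraph_adj] <;>
        first
          | exact iff_of_true (by assumption) (by decide)
          | exact iff_of_false (by assumption) (by decide)
end
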